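/- arXiv:1611.06574 — 6 statements merged into one kernel-verified Lean document; each statement's English description precedes it below -/
import Mathlib

section
/- Let θ be an equivalence relation on E_k and let τ be an h-ary relation on E_k which is diagonal through θ. Then Pol(τ) = Pol(θ) or Pol(τ) is the set of all finitary operations on E_k. -/
/-- A finitary operation on `Fin k`: a pair of an arity `n` and a function
`(Fin n → Fin k) → Fin k`. -/
abbrev Ops (k : ℕ) := Σ n : ℕ, ((Fin n → Fin k) → Fin k)

/-- The set of finitary operations preserving a binary relation `θ` on `Fin k`. -/
def PolB {k : ℕ} (θ : Set (Fin k × Fin k)) : Set (Ops k) :=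
  {f | ∀ a b : Fin f.1 → Fin k, (∀ i, (a i, b i) ∈ θ) → (f.2 a, f.2 b) ∈ θ}

/-- The set of finitary operations preserving an `h`-ary relation `ρ` on `Fin k`. -/
def PolH {k h : ℕ} (ρ : Set (Fin h → Fin k)) : Set (Ops k) :=
  {f | ∀ M : Fin h → Fin f.1 → Fin k,
    (∀ i, (fun j => M j i) ∈ ρ) → (fun j => f.2 (M j)) ∈ ρ}

/-- A clone: contains all projections and is closed under composition. -/
def IsClone {k : ℕ} (C : Set (Ops k)) : Prop :=
  (∀ (n : ℕ) (i : Fin n), (⟨n, fun x => x i⟩ : Ops k) ∈ C) ∧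
  (∀ (n m : ℕ) (f : (Fin n → Fin k) → Fin k) (g : Fin n → (Fin m → Fin k) → Fin k),
    (⟨n, f⟩ : Ops k) ∈ C → (∀ i, (⟨m, g i⟩ : Ops k) ∈ C) →
    (⟨m, fun x => f fun i => g i x⟩ : Ops k) ∈ C)

/-- `C` is maximal in `D`: `C ⊊ D` and no clone lies strictly between them. -/
def MaximalIn {k : ℕ} (C D : Set (Ops k)) : Prop :=
  C ⊂ D ∧ ∀ F : Set (Ops k), IsClone F → ¬(C ⊂ F ∧ F ⊂ D)

/-- `θ` is an equivalence relation (as a set of pairs). -/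
def IsEquivRel {A : Type*} (θ : Set (A × A)) : Prop :=
  (∀ a, (a, a) ∈ θ) ∧ (∀ a b, (a, b) ∈ θ → (b, a) ∈ θ) ∧
    (∀ a b c, (a, b) ∈ θ → (b, c) ∈ θ → (a, c) ∈ θ)

/-- The diagonal relation `Δ` on `Fin k`. -/
def diag (k : ℕ) : Set (Fin k × Fin k) := {p | p.1 = p.2}

/-- A nontrivial equivalence relation: `Δ ⊊ θ ⊊ (Fin k)²`. -/
def NontrivEquiv {k : ℕ} (θ : Set (Fin k × Fin k)) : Prop :=
  IsEquivRel θ ∧ diag k ⊂ θ ∧ θ ⊂ Set.univ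

/-- Relational composition `α ∘ β = {(a,c) : ∃ b, (a,b) ∈ α ∧ (b,c) ∈ β}`. -/
def relComp {k : ℕ} (α β : Set (Fin k × Fin k)) : Set (Fin k × Fin k) :=
  {p | ∃ b, (p.1, b) ∈ α ∧ (b, p.2) ∈ β}

/-- The set of equivalence classes of `θ`. -/
def classesOf {A : Type*} (θ : Set (A × A)) : Set (Set A) :=
  {S | ∃ a : A, S = {b | (a, b) ∈ θ}}

/-- Totally reflexive: every tuple with a repeated entry is in `ρ`. -/
def TotallyReflexive {k h : ℕ} (ρ : Set (Fin h → Fin k)) : Prop :=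
  ∀ v : Fin h → Fin k, (∃ i j : Fin h, i ≠ j ∧ v i = v j) → v ∈ ρ

/-- Totally symmetric: closed under all permutations of coordinates. -/
def TotallySymmetric {k h : ℕ} (ρ : Set (Fin h → Fin k)) : Prop :=
  ∀ (v : Fin h → Fin k) (σ : Equiv.Perm (Fin h)), v ∈ ρ → v ∘ ⇑σ ∈ ρ

/-- The center of an `h`-ary relation: elements `a` such that every tuple whose
first coordinate is `a` lies in `ρ`. -/
def center {k h : ℕ} (ρ : Set (Fin h → Fin k)) : Set (Fin k) :=
  {a | ∀ v : Fin h → Fin k, (∀ i : Fin h, (i : ℕ) = 0 → v i = a) → v ∈ ρ}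

/-- An `h`-ary central relation. -/
def IsCentralRel {k h : ℕ} (ρ : Set (Fin h → Fin k)) : Prop :=
  ρ ≠ Set.univ ∧ TotallyReflexive ρ ∧ TotallySymmetric ρ ∧ (center ρ).Nonempty

/-- `η = {(u₁,…,u_h) : (u₁,u₂) ∈ θ}` (0-indexed: first two coordinates θ-related). -/
def eta {k : ℕ} (h : ℕ) (θ : Set (Fin k × Fin k)) : Set (Fin h → Fin k) :=
  {v | ∀ i j : Fin h, (i : ℕ) = 0 → (j : ℕ) = 1 → (v i, v j) ∈ θ}

/-- `ρ_{l,θ}`: tuples whose coordinates from position `l` onwards can be moved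
inside their θ-classes so as to land in `ρ` (0-indexed coordinates). -/
def rhoTh {k h : ℕ} (l : ℕ) (θ : Set (Fin k × Fin k)) (ρ : Set (Fin h → Fin k)) :
    Set (Fin h → Fin k) :=
  {a | ∃ u : Fin h → Fin k, (∀ j : Fin h, l ≤ (j : ℕ) → (u j, a j) ∈ θ) ∧
    (fun j : Fin h => if (j : ℕ) < l then a j else u j) ∈ ρ}

/-- `ρ` is θ-closed: `ρ = ρ_{0,θ}`. -/
def ThetaClosed {k h : ℕ} (θ : Set (Fin k × Fin k)) (ρ : Set (Fin h → Fin k)) : Prop :=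
  ρ = rhoTh 0 θ ρ

/-- `γ_σ = {(a_{σ(1)},…,a_{σ(h)}) : a ∈ γ}`. -/
def permuted {k h : ℕ} (σ : Equiv.Perm (Fin h)) (γ : Set (Fin h → Fin k)) :
    Set (Fin h → Fin k) :=
  {w | w ∘ ⇑σ.symm ∈ γ}

/-- A transversal of order `l` for the θ-classes: a system of representatives
(pairwise θ-unrelated, meeting every class) such that every tuple whose
coordinates from position `l` onwards lie in `T` belongs to `ρ`. -/
def IsTransversal {k h : ℕ} (θ : Set (Fin k × Fin k)) (ρ : Set (Fin h → Fin k)) (l : ℕ)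
    (T : Set (Fin k)) : Prop :=
  (∀ u ∈ T, ∀ v ∈ T, u ≠ v → (u, v) ∉ θ) ∧
  (∀ a : Fin k, ∃ u ∈ T, (a, u) ∈ θ) ∧
  (∀ w : Fin h → Fin k, (∀ j : Fin h, l ≤ (j : ℕ) → w j ∈ T) → w ∈ ρ)

/-- `ρ` is weakly θ-closed of order `l` (`1 ≤ l ≤ h-1`). -/
def WeaklyThetaClosed {k h : ℕ} (θ : Set (Fin k × Fin k)) (ρ : Set (Fin h → Fin k))
    (l : ℕ) : Prop :=
  1 ≤ l ∧ l ≤ h - 1 ∧ (∃ T : Set (Fin k), IsTransversal θ ρ (l - 1) T) ∧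
  ρ = ⋂ σ : Equiv.Perm (Fin h), permuted σ (rhoTh l θ ρ)

/-- Type I: `η ⊆ ρ` and every θ-class contains a central element of `ρ`. -/
def TypeI {k h : ℕ} (θ : Set (Fin k × Fin k)) (ρ : Set (Fin h → Fin k)) : Prop :=
  eta h θ ⊆ ρ ∧ ∀ a : Fin k, ∃ c : Fin k, (a, c) ∈ θ ∧ c ∈ center ρ

/-- Type II: `ρ` is θ-closed. -/
def TypeII {k h : ℕ} (θ : Set (Fin k × Fin k)) (ρ : Set (Fin h → Fin k)) : Prop :=
  ThetaClosed θ ρ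

/-- Type III: `ρ` is weakly θ-closed of some order and `η ⊆ ρ`. -/
def TypeIII {k h : ℕ} (θ : Set (Fin k × Fin k)) (ρ : Set (Fin h → Fin k)) : Prop :=
  (∃ l : ℕ, WeaklyThetaClosed θ ρ l) ∧ eta h θ ⊆ ρ

/-- `τ` is a diagonal relation through `θ`. -/
def IsDiagonal {k h : ℕ} (θ : Set (Fin k × Fin k)) (τ : Set (Fin h → Fin k)) : Prop :=
  ∃ (ε₁ : Setoid (Fin h)) (ε₂ : Set (Fin h × Fin h)),
    (∀ p ∈ ε₂, (∀ j, ε₁.r p.1 j → p.1 ≤ j) ∧ (∀ j, ε₁.r p.2 j → p.2 ≤ j)) ∧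
    (∀ i : Fin h, (∀ j, ε₁.r i j → i ≤ j) → (i, i) ∈ ε₂) ∧
    (∀ i j, (i, j) ∈ ε₂ → (j, i) ∈ ε₂) ∧
    (∀ i j l, (i, j) ∈ ε₂ → (j, l) ∈ ε₂ → (i, l) ∈ ε₂) ∧
    τ = {a | (∀ i j, ε₁.r i j → a i = a j) ∧ (∀ i j, (i, j) ∈ ε₂ → (a i, a j) ∈ θ)}

/-- `ρ^l_{0,θ}`: `l`-tuples which can be moved inside their θ-classes so that
every `h`-tuple with all entries among the moved elements lies in `ρ`. -/
def rhoPow {k h : ℕ} (l : ℕ) (θ : Set (Fin k × Fin k)) (ρ : Set (Fin h → Fin k)) :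
    Set (Fin l → Fin k) :=
  {u | ∃ e : Fin l → Fin k, (∀ i, (e i, u i) ∈ θ) ∧
    ∀ w : Fin h → Fin k, (∀ j, ∃ i, w j = e i) → w ∈ ρ}

/-- An `h`-regular family of equivalence relations. -/
def IsHRegFamily {A : Type*} (h : ℕ) {m : ℕ} (T : Fin m → Set (A × A)) : Prop :=
  (∀ i, IsEquivRel (T i)) ∧
  (∀ i, (classesOf (T i)).ncard = h) ∧
  (∀ x : Fin m → A, (⋂ i, {b | (x i, b) ∈ T i}).Nonempty)

/-- The `h`-regular relation determined by the family `T`: tuples whose set of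
components meets at most `h-1` classes of each member of the family. -/
def hRegRel {A : Type*} (h : ℕ) {m : ℕ} (T : Fin m → Set (A × A)) : Set (Fin h → A) :=
  {a | ∀ i : Fin m, {S ∈ classesOf (T i) | ∃ j : Fin h, a j ∈ S}.ncard ≤ h - 1}

/-- `ρ` is an `h`-regular relation: determined by some `h`-regular family. -/
def IsHRegularRel {A : Type*} (h : ℕ) (ρ : Set (Fin h → A)) : Prop :=
  ∃ m : ℕ, 1 ≤ m ∧ ∃ T : Fin m → Set (A × A), IsHRegFamily h T ∧ ρ = hRegRel h T

/-- For an equivalence relation `θ` and an `h`-ary relation `τ` diagonal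
through `θ`, either `Pol(τ) = Pol(θ)` or `Pol(τ)` is the set of all finitary
operations. -/
theorem stmt9 (k h : ℕ) (θ : Set (Fin k × Fin k)) (hθ : IsEquivRel θ)
    (τ : Set (Fin h → Fin k)) (hτ : IsDiagonal θ τ) :
    PolH τ = PolB θ ∨ PolH τ = Set.univ := by

  classical
  obtain ⟨ε₁, ε₂, hmin, _hrfl, _hsym, _htr, hτeq⟩ := hτ
  by_cases hnd : ∀ p ∈ ε₂, p.1 = p.2
  · right
    ext f
    simp only [Set.mem_univ, iff_true, PolH, Set.mem_setOf_eq]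
    intro M hM
    rw [hτeq] at hM ⊢
    refine ⟨fun i j hij => ?_, fun i j hij => ?_⟩
    · have : M i = M j := funext fun t => (hM t).1 i j hij
      exact congrArg f.snd this
    · have h1 : (i, j).1 = (i, j).2 := hnd _ hij
      simp only at h1
      subst h1
      exact hθ.1 _
  · left
    push_neg at hnd
    obtain ⟨⟨i₀, j₀⟩, hmem, hne⟩ := hnd
    simp only at hne
    ext f
    simp only [PolH, PolB, Set.mem_setOf_eq]
    constructor
    · intro hf a b hab
      set M : Fin h → Fin f.1 → Fin k := fun i t => if ε₁.r i j₀ then b t else a t with hMdef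
      have hcol : ∀ t, (fun j => M j t) ∈ τ := by
        intro t
        rw [hτeq]
        refine ⟨fun i j hij => ?_, fun i j hij => ?_⟩
        · by_cases hi : ε₁.r i j₀
          · have hj : ε₁.r j j₀ := ε₁.iseqv.trans (ε₁.iseqv.symm hij) hi
            simp [M, hi, hj]
          · have hj : ¬ ε₁.r j j₀ := fun hj => hi (ε₁.iseqv.trans hij hj)
            simp [M, hi, hj]
        · by_cases hi : ε₁.r i j₀ <;> by_cases hj : ε₁.r j j₀ <;>
            simp only [M, hi, hj, if_true, if_false]
          · exact hθ.1 _
          · exact hθ.2.1 _ _ (hab t)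
          · exact hab t
          · exact hθ.1 _
      have hout := hf M hcol
      rw [hτeq] at hout
      have h1 : ¬ ε₁.r i₀ j₀ := by
        intro hr
        exact hne (le_antisymm ((hmin _ hmem).1 j₀ hr)
          ((hmin _ hmem).2 i₀ (ε₁.iseqv.symm hr)))
      have hM1 : M i₀ = a := funext fun t => by simp [M, h1]
      have hM2 : M j₀ = b := funext fun t => by simp [M, ε₁.iseqv.refl j₀]
      have := hout.2 i₀ j₀ hmem
      simp only at this
      rw [hM1, hM2] at this
      exact this
    · intro hf M hM
      rw [hτeq] at hM ⊢
      refine ⟨fun i j hij => ?_, fun i j hij => ?_⟩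
      · have : M i = M j := funext fun t => (hM t).1 i j hij
        exact congrArg f.snd this
      · exact hf (M i) (M j) fun t => (hM t).2 i j hij
end

section
/- Let k ≥ 3, let θ be a nontrivial equivalence relation on E_k, and let ρ be an h-ary central relation on E_k with h ≥ 3 which is of type I, II, or III. Then Pol(θ) ∩ Pol(ρ) contains an (h+1)-ary near-unanimity operation, i.e., an operation m : E_k^{h+1} → E_k such that m(y,x,…,x) = m(x,y,x,…,x) = … = m(x,…,x,y) = x for all x, y ∈ E_k. -/
/-! ### Auxiliary material for the near-unanimity construction -/

open scoped Classical

section NUAux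

variable {k h : ℕ}

/-- `v` occurs in at least `h` of the `h+1` coordinates of `x`. -/
private def nuMaj (x : Fin (h + 1) → Fin k) (v : Fin k) : Prop :=
  h ≤ (Finset.univ.filter fun i => x i = v).card

/-- Positions whose entry is θ-related to the entry at `i`. -/
private noncomputable def cmajS (θ : Set (Fin k × Fin k)) (x : Fin (h + 1) → Fin k)
    (i : Fin (h + 1)) : Finset (Fin (h + 1)) :=
  Finset.univ.filter fun j => (x i, x j) ∈ θ

/-- The θ-class of the entry at `i` contains at least `h` entries of `x`. -/
private def cmaj (θ : Set (Fin k × Fin k)) (x : Fin (h + 1) → Fin k)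
    (i : Fin (h + 1)) : Prop :=
  h ≤ (cmajS θ x i).card

/-- The near-unanimity operation. -/
private noncomputable def nuOp (θ : Set (Fin k × Fin k)) (rep : Fin k → Fin k) (c : Fin k)
    (x : Fin (h + 1) → Fin k) : Fin k :=
  if hv : ∃ v, nuMaj x v then hv.choose
  else if hi : ∃ i, cmaj θ x i then rep (x hi.choose) else c

private lemma maj_inter (hh : 2 ≤ h) {S T : Finset (Fin (h + 1))}
    (hS : h ≤ S.card) (hT : h ≤ T.card) : ∃ j, j ∈ S ∧ j ∈ T := by
  have h1 : (S ∪ T).card ≤ h + 1 := by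
    have := Finset.card_le_univ (S ∪ T)
    simpa using this
  have h2 := Finset.card_union_add_card_inter S T
  obtain ⟨j, hj⟩ := Finset.card_pos.mp (show 0 < (S ∩ T).card by omega)
  exact ⟨j, Finset.mem_inter.mp hj⟩

private lemma maj_unique (hh : 2 ≤ h) {x : Fin (h + 1) → Fin k} {v w : Fin k}
    (hv : nuMaj x v) (hw : nuMaj x w) : v = w := by
  obtain ⟨j, hjv, hjw⟩ := maj_inter hh hv hw
  rw [Finset.mem_filter] at hjv hjw
  rw [← hjv.2, ← hjw.2]

private lemma nuOp_maj (hh : 2 ≤ h) (θ : Set (Fin k × Fin k)) (rep : Fin k → Fin k)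
    (c : Fin k) {x : Fin (h + 1) → Fin k} {v : Fin k} (hv : nuMaj x v) :
    nuOp θ rep c x = v := by
  have he : ∃ v, nuMaj x v := ⟨v, hv⟩
  rw [nuOp, dif_pos he]
  exact maj_unique hh he.choose_spec hv

private lemma nuOp_nu (hh : 2 ≤ h) (θ : Set (Fin k × Fin k)) (rep : Fin k → Fin k)
    (c : Fin k) (x y : Fin k) (i : Fin (h + 1)) :
    nuOp θ rep c (Function.update (fun _ => x) i y) = x := by
  apply nuOp_maj hh
  unfold nuMaj
  have hsub : Finset.univ.erase i ⊆
      Finset.univ.filter fun j => Function.update (fun _ => x) i y j = x := by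
    intro j hj
    rw [Finset.mem_filter]
    exact ⟨Finset.mem_univ _, Function.update_of_ne (Finset.ne_of_mem_erase hj) _ _⟩
  have hcard := Finset.card_le_card hsub
  rwa [Finset.card_erase_of_mem (Finset.mem_univ i), Finset.card_univ,
    Fintype.card_fin, Nat.add_sub_cancel] at hcard

private lemma maj_cmaj {θ : Set (Fin k × Fin k)} (hr : ∀ a : Fin k, (a, a) ∈ θ)
    (hh : 1 ≤ h) {x : Fin (h + 1) → Fin k} {v : Fin k} (hv : nuMaj x v) :
    ∃ i, x i = v ∧ cmaj θ x i := by
  obtain ⟨i, hi⟩ := Finset.card_pos.mp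
    (show 0 < (Finset.univ.filter fun i => x i = v).card by unfold nuMaj at hv; omega)
  rw [Finset.mem_filter] at hi
  refine ⟨i, hi.2, ?_⟩
  refine le_trans hv (Finset.card_le_card ?_)
  intro j hj
  rw [Finset.mem_filter] at hj
  rw [cmajS, Finset.mem_filter]
  refine ⟨Finset.mem_univ _, ?_⟩
  rw [hi.2, hj.2]
  exact hr v

private lemma cmaj_transfer {θ : Set (Fin k × Fin k)}
    (hs : ∀ a b : Fin k, (a, b) ∈ θ → (b, a) ∈ θ)
    (ht : ∀ a b c : Fin k, (a, b) ∈ θ → (b, c) ∈ θ → (a, c) ∈ θ)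
    {a b : Fin (h + 1) → Fin k} (hab : ∀ i, (a i, b i) ∈ θ)
    {i : Fin (h + 1)} (hi : cmaj θ a i) : cmaj θ b i := by
  refine le_trans hi (Finset.card_le_card ?_)
  intro j hj
  rw [cmajS, Finset.mem_filter] at hj ⊢
  exact ⟨Finset.mem_univ _, ht _ _ _ (hs _ _ (hab i)) (ht _ _ _ hj.2 (hab j))⟩

private lemma nuOp_theta_aux (hh : 2 ≤ h) {θ : Set (Fin k × Fin k)}
    (hr : ∀ a : Fin k, (a, a) ∈ θ)
    (hs : ∀ a b : Fin k, (a, b) ∈ θ → (b, a) ∈ θ)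
    (ht : ∀ a b c : Fin k, (a, b) ∈ θ → (b, c) ∈ θ → (a, c) ∈ θ)
    {rep : Fin k → Fin k} (hrep : ∀ x, (x, rep x) ∈ θ) (c : Fin k)
    {a b : Fin (h + 1) → Fin k} (hab : ∀ i, (a i, b i) ∈ θ)
    (hva : ∃ v, nuMaj a v) (hvb : ¬∃ v, nuMaj b v) :
    (nuOp θ rep c a, nuOp θ rep c b) ∈ θ := by
  obtain ⟨va, hva'⟩ := hva
  rw [nuOp_maj hh θ rep c hva']
  obtain ⟨i₀, hxi₀, hcm⟩ := maj_cmaj hr (by omega) hva'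
  have hib : ∃ i, cmaj θ b i := ⟨i₀, cmaj_transfer hs ht hab hcm⟩
  rw [nuOp, dif_neg hvb, dif_pos hib]
  have hcmb : cmaj θ b hib.choose := hib.choose_spec
  have hcma : cmaj θ a hib.choose :=
    cmaj_transfer hs ht (fun i => hs _ _ (hab i)) hcmb
  obtain ⟨j, hj1, hj2⟩ := maj_inter hh hva' hcma
  rw [Finset.mem_filter] at hj1
  rw [cmajS, Finset.mem_filter] at hj2
  -- va = a j,  (a i₀', a j) ∈ θ  where i₀' = hib.choose
  have h1 : (va, a hib.choose) ∈ θ := by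
    rw [← hj1.2]; exact hs _ _ hj2.2
  exact ht _ _ _ (ht _ _ _ h1 (hab hib.choose)) (hrep _)

private lemma nuOp_theta (hh : 2 ≤ h) {θ : Set (Fin k × Fin k)}
    (hr : ∀ a : Fin k, (a, a) ∈ θ)
    (hs : ∀ a b : Fin k, (a, b) ∈ θ → (b, a) ∈ θ)
    (ht : ∀ a b c : Fin k, (a, b) ∈ θ → (b, c) ∈ θ → (a, c) ∈ θ)
    {rep : Fin k → Fin k} (hrep : ∀ x, (x, rep x) ∈ θ) (c : Fin k)
    {a b : Fin (h + 1) → Fin k} (hab : ∀ i, (a i, b i) ∈ θ) :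
    (nuOp θ rep c a, nuOp θ rep c b) ∈ θ := by
  by_cases hva : ∃ v, nuMaj a v
  · by_cases hvb : ∃ v, nuMaj b v
    · obtain ⟨va, hva'⟩ := hva
      obtain ⟨vb, hvb'⟩ := hvb
      rw [nuOp_maj hh θ rep c hva', nuOp_maj hh θ rep c hvb']
      obtain ⟨j, hj1, hj2⟩ := maj_inter hh hva' hvb'
      rw [Finset.mem_filter] at hj1 hj2
      rw [← hj1.2, ← hj2.2]
      exact hab j
    · exact nuOp_theta_aux hh hr hs ht hrep c hab hva hvb
  · by_cases hvb : ∃ v, nuMaj b v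
    · exact hs _ _ (nuOp_theta_aux hh hr hs ht hrep c
        (fun i => hs _ _ (hab i)) hvb hva)
    · rw [nuOp, dif_neg hva, nuOp, dif_neg hvb]
      by_cases hia : ∃ i, cmaj θ a i
      · have hib : ∃ i, cmaj θ b i := ⟨hia.choose, cmaj_transfer hs ht hab hia.choose_spec⟩
        rw [dif_pos hia, dif_pos hib]
        have hcma2 : cmaj θ a hib.choose :=
          cmaj_transfer hs ht (fun i => hs _ _ (hab i)) hib.choose_spec
        obtain ⟨j, hj1, hj2⟩ := maj_inter hh hia.choose_spec hcma2
        rw [cmajS, Finset.mem_filter] at hj1 hj2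
        have h1 : (a hia.choose, a hib.choose) ∈ θ := ht _ _ _ hj1.2 (hs _ _ hj2.2)
        exact ht _ _ _ (hs _ _ (hrep _)) (ht _ _ _ (ht _ _ _ h1 (hab _)) (hrep _))
      · have hib : ¬∃ i, cmaj θ b i := by
          rintro ⟨i, hi⟩
          exact hia ⟨i, cmaj_transfer hs ht (fun i => hs _ _ (hab i)) hi⟩
        rw [dif_neg hia, dif_neg hib]
        exact hr c

private lemma row_struct (hh : 2 ≤ h) {θ : Set (Fin k × Fin k)} (rep : Fin k → Fin k)
    (c : Fin k) {x : Fin (h + 1) → Fin k}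
    (hx : (∃ v, nuMaj x v) ∨ ∃ i, cmaj θ x i) :
    ∃ S : Finset (Fin (h + 1)), h ≤ S.card ∧
      ((∀ i ∈ S, x i = nuOp θ rep c x) ∨
        ∃ z, nuOp θ rep c x = rep z ∧ ∀ i ∈ S, (z, x i) ∈ θ) := by
  by_cases hv : ∃ v, nuMaj x v
  · obtain ⟨v, hv'⟩ := hv
    refine ⟨Finset.univ.filter fun i => x i = v, hv', Or.inl fun i hi => ?_⟩
    rw [Finset.mem_filter] at hi
    rw [hi.2, nuOp_maj hh θ rep c hv']
  · have hi : ∃ i, cmaj θ x i := hx.resolve_left hv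
    refine ⟨cmajS θ x hi.choose, hi.choose_spec, Or.inr ⟨x hi.choose, ?_, ?_⟩⟩
    · rw [nuOp, dif_neg hv, dif_pos hi]
    · intro i his
      rw [cmajS, Finset.mem_filter] at his
      exact his.2

private lemma good_column (hh : 1 ≤ h) (S : Fin h → Finset (Fin (h + 1)))
    (hS : ∀ j, h ≤ (S j).card) : ∃ i, ∀ j, i ∈ S j := by
  by_contra hcon
  push_neg at hcon
  have hsub : (Finset.univ : Finset (Fin (h + 1))) ⊆
      Finset.univ.biUnion fun j => (S j)ᶜ := by
    intro i _
    obtain ⟨j, hj⟩ := hcon i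
    exact Finset.mem_biUnion.mpr ⟨j, Finset.mem_univ _, Finset.mem_compl.mpr hj⟩
  have h1 : h + 1 ≤ (Finset.univ.biUnion fun j : Fin h => (S j)ᶜ).card := by
    have := Finset.card_le_card hsub
    simpa using this
  have h2 : (Finset.univ.biUnion fun j : Fin h => (S j)ᶜ).card ≤ h * 1 := by
    refine le_trans Finset.card_biUnion_le ?_
    have : ∀ j : Fin h, ((S j)ᶜ).card ≤ 1 := by
      intro j
      rw [Finset.card_compl, Fintype.card_fin]
      have := hS j
      omega
    calc ∑ j : Fin h, ((S j)ᶜ).card ≤ ∑ _j : Fin h, 1 :=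
          Finset.sum_le_sum fun j _ => this j
      _ = h * 1 := by simp [Finset.sum_const, Finset.card_univ]
  omega

private lemma card_filter_lt_fin {h a : ℕ} (ha : a ≤ h) :
    (Finset.univ.filter fun j : Fin h => (j : ℕ) < a).card = a := by
  induction a with
  | zero => simp
  | succ a ih =>
    have ha' : a ≤ h := by omega
    have hstep : (Finset.univ.filter fun j : Fin h => (j : ℕ) < a + 1) =
        insert (⟨a, by omega⟩ : Fin h) (Finset.univ.filter fun j : Fin h => (j : ℕ) < a) := by
      ext j
      simp only [Finset.mem_filter, Finset.mem_insert, Finset.mem_univ, true_and]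
      constructor
      · intro hj
        rcases Nat.lt_succ_iff_lt_or_eq.mp hj with hj' | hj'
        · exact Or.inr hj'
        · exact Or.inl (Fin.ext hj')
      · rintro (rfl | hj)
        · exact show a < a + 1 by omega
        · omega
    rw [hstep, Finset.card_insert_of_notMem (by simp), ih ha']

private lemma card_filter_perm {h : ℕ} (p : Fin h → Prop) (σ : Equiv.Perm (Fin h)) :
    (Finset.univ.filter fun j => p (σ j)).card = (Finset.univ.filter p).card := by
  apply Finset.card_bij (fun j _ => σ j)
  · intro a ha
    rw [Finset.mem_filter] at ha ⊢
    exact ⟨Finset.mem_univ _, ha.2⟩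
  · intro a _ b _ hab
    exact σ.injective hab
  · intro b hb
    rw [Finset.mem_filter] at hb
    refine ⟨σ.symm b, ?_, by simp⟩
    rw [Finset.mem_filter]
    simpa using hb.2

private lemma mem_of_center (hh : 3 ≤ h) {ρ : Set (Fin h → Fin k)}
    (hsym : TotallySymmetric ρ) {o : Fin h → Fin k} {p : Fin h}
    (hc : o p ∈ center ρ) : o ∈ ρ := by
  have h0 : (0 : ℕ) < h := by omega
  set z : Fin h := ⟨0, h0⟩ with hz
  set σ : Equiv.Perm (Fin h) := Equiv.swap z p with hσ
  have hv : (o ∘ σ) ∈ ρ := by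
    apply hc
    intro i hi
    have hiz : i = z := Fin.ext hi
    subst hiz
    simp [hσ, Function.comp, Equiv.swap_apply_left]
  have h2 := hsym _ σ hv
  have heq : (o ∘ ⇑σ) ∘ ⇑σ = o := by
    funext j
    simp [hσ, Function.comp, Equiv.swap_apply_self]
  rwa [heq] at h2

private lemma mem_of_few_bad {d : ℕ} (hd : d ≤ h) {ρ : Set (Fin h → Fin k)}
    (hsym : TotallySymmetric ρ) {T : Set (Fin k)}
    (hT : ∀ w : Fin h → Fin k, (∀ j : Fin h, d ≤ (j : ℕ) → w j ∈ T) → w ∈ ρ) :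
    ∀ w : Fin h → Fin k, (Finset.univ.filter fun j => w j ∉ T).card ≤ d → w ∈ ρ := by
  suffices H : ∀ n, ∀ w : Fin h → Fin k,
      (Finset.univ.filter fun j => w j ∉ T).card ≤ d →
      (Finset.univ.filter fun j : Fin h => d ≤ (j : ℕ) ∧ w j ∉ T).card ≤ n → w ∈ ρ by
    intro w hw
    exact H _ w hw le_rfl
  intro n
  induction n with
  | zero =>
    intro w hw hmis
    apply hT
    intro j hj
    by_contra hbad
    have hmem : j ∈ Finset.univ.filter fun j : Fin h => d ≤ (j : ℕ) ∧ w j ∉ T := by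
      rw [Finset.mem_filter]
      exact ⟨Finset.mem_univ _, hj, hbad⟩
    have := Finset.card_pos.mpr ⟨j, hmem⟩
    omega
  | succ n ih =>
    intro w hw hmis
    by_cases hle : (Finset.univ.filter fun j : Fin h => d ≤ (j : ℕ) ∧ w j ∉ T).card ≤ n
    · exact ih w hw hle
    obtain ⟨j₁, hj₁⟩ := Finset.card_pos.mp
      (show 0 < (Finset.univ.filter fun j : Fin h => d ≤ (j : ℕ) ∧ w j ∉ T).card by omega)
    rw [Finset.mem_filter] at hj₁
    obtain ⟨-, hdj₁, hbad₁⟩ := hj₁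
    have hex : ∃ j₂ : Fin h, (j₂ : ℕ) < d ∧ w j₂ ∈ T := by
      by_contra hcon
      push_neg at hcon
      have hsub : insert j₁ (Finset.univ.filter fun j : Fin h => (j : ℕ) < d) ⊆
          Finset.univ.filter fun j => w j ∉ T := by
        intro j hj
        rcases Finset.mem_insert.mp hj with rfl | hj
        · rw [Finset.mem_filter]; exact ⟨Finset.mem_univ _, hbad₁⟩
        · rw [Finset.mem_filter] at hj ⊢
          exact ⟨Finset.mem_univ _, hcon j hj.2⟩
      have hcard := Finset.card_le_card hsub
      rw [Finset.card_insert_of_notMem (by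
        rw [Finset.mem_filter]; push_neg; intro _; omega),
        card_filter_lt_fin hd] at hcard
      omega
    obtain ⟨j₂, hdj₂, hgood₂⟩ := hex
    set σ : Equiv.Perm (Fin h) := Equiv.swap j₁ j₂ with hσ
    have hρ' : w ∘ ⇑σ ∈ ρ := by
      apply ih
      · have hcc : (Finset.univ.filter fun j => (w ∘ ⇑σ) j ∉ T).card
            = (Finset.univ.filter fun j => w j ∉ T).card := by
          apply Finset.card_bij (fun j _ => σ j)
          · intro a ha
            rw [Finset.mem_filter] at ha ⊢
            exact ⟨Finset.mem_univ _, ha.2⟩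
          · intro a _ b _ hab
            exact σ.injective hab
          · intro b hb
            rw [Finset.mem_filter] at hb
            refine ⟨σ.symm b, ?_, by simp⟩
            rw [Finset.mem_filter]
            refine ⟨Finset.mem_univ _, ?_⟩
            show w (σ (σ.symm b)) ∉ T
            simpa using hb.2
        rw [hcc]
        exact hw
      · have hset : (Finset.univ.filter fun j : Fin h => d ≤ (j : ℕ) ∧ (w ∘ ⇑σ) j ∉ T) =
            (Finset.univ.filter fun j : Fin h => d ≤ (j : ℕ) ∧ w j ∉ T).erase j₁ := by
          ext j
          simp only [Finset.mem_filter, Finset.mem_erase, Finset.mem_univ, true_and,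
            Function.comp]
          rcases eq_or_ne j j₁ with rfl | h1
          · rw [hσ]
            simp only [Equiv.swap_apply_left]
            constructor
            · rintro ⟨-, hb⟩; exact absurd hgood₂ hb
            · rintro ⟨hne, -⟩; exact absurd rfl hne
          · rcases eq_or_ne j j₂ with rfl | h2
            · rw [hσ]
              simp only [Equiv.swap_apply_right]
              constructor
              · rintro ⟨hdj, -⟩; omega
              · rintro ⟨-, hdj, -⟩; omega
            · rw [hσ, Equiv.swap_apply_of_ne_of_ne h1 h2]
              constructor
              · rintro ⟨h3, h4⟩; exact ⟨h1, h3, h4⟩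
              · rintro ⟨-, h3, h4⟩; exact ⟨h3, h4⟩
        rw [hset, Finset.card_erase_of_mem (by
          rw [Finset.mem_filter]; exact ⟨Finset.mem_univ _, hdj₁, hbad₁⟩)]
        omega
    have heq : (w ∘ ⇑σ) ∘ ⇑σ = w := by
      funext j
      simp [hσ, Function.comp, Equiv.swap_apply_self]
    have h2 := hsym _ σ hρ'
    rwa [heq] at h2

private lemma polH_core (hh : 3 ≤ h) {θ : Set (Fin k × Fin k)}
    {ρ : Set (Fin h → Fin k)} (hsymρ : TotallySymmetric ρ)
    {rep : Fin k → Fin k} {c : Fin k} (hc : c ∈ center ρ)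
    (M : Fin h → Fin (h + 1) → Fin k)
    (main : ∀ (S : Fin h → Finset (Fin (h + 1))) (i0 : Fin (h + 1)),
      (∀ j, i0 ∈ S j) →
      (∀ j, (∀ i ∈ S j, M j i = nuOp θ rep c (M j)) ∨
        ∃ z, nuOp θ rep c (M j) = rep z ∧ ∀ i ∈ S j, (z, M j i) ∈ θ) →
      (fun j => nuOp θ rep c (M j)) ∈ ρ) :
    (fun j => nuOp θ rep c (M j)) ∈ ρ := by
  by_cases h3 : ∀ j : Fin h, (∃ v, nuMaj (M j) v) ∨ (∃ i, cmaj θ (M j) i)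
  · choose S hcard hprop using fun j => row_struct (by omega) rep c (h3 j)
    obtain ⟨i0, hi0⟩ := good_column (by omega) S hcard
    exact main S i0 hi0 hprop
  · push_neg at h3
    obtain ⟨j, hj⟩ := h3
    have hoc : nuOp θ rep c (M j) = c := by
      rw [nuOp, dif_neg (not_exists.mpr hj.1), dif_neg (not_exists.mpr hj.2)]
    exact mem_of_center hh hsymρ (p := j) (by rw [hoc]; exact hc)

end NUAux

/-- For `ρ` a central relation of type I, II or III, `Pol(θ) ∩ Pol(ρ)`
contains an `(h+1)`-ary near-unanimity operation. -/
theorem stmt12 (k h : ℕ) (hk : 3 ≤ k) (hh : 3 ≤ h)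
    (θ : Set (Fin k × Fin k)) (hθ : NontrivEquiv θ)
    (ρ : Set (Fin h → Fin k)) (hρ : IsCentralRel ρ)
    (htype : TypeI θ ρ ∨ TypeII θ ρ ∨ TypeIII θ ρ) :
    ∃ m : (Fin (h + 1) → Fin k) → Fin k,
      (⟨h + 1, m⟩ : Ops k) ∈ PolB θ ∩ PolH ρ ∧
      ∀ (x y : Fin k) (i : Fin (h + 1)),
        m (Function.update (fun _ => x) i y) = x := by
  obtain ⟨⟨hrfl, hsymm, htrans⟩, -, -⟩ := hθ
  obtain ⟨-, hreflρ, hsymρ, hcent⟩ := hρ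
  have hh2 : 2 ≤ h := by omega
  suffices H : ∃ rep : Fin k → Fin k, ∃ c : Fin k, (∀ x, (x, rep x) ∈ θ) ∧
      ∀ M : Fin h → Fin (h + 1) → Fin k, (∀ i, (fun j => M j i) ∈ ρ) →
        (fun j => nuOp θ rep c (M j)) ∈ ρ by
    obtain ⟨rep, c, hrep, hpolH⟩ := H
    refine ⟨nuOp θ rep c, ⟨?_, ?_⟩, fun x y i => nuOp_nu hh2 θ rep c x y i⟩
    · intro a b hab
      exact nuOp_theta hh2 hrfl hsymm htrans hrep c hab
    · intro M hM
      exact hpolH M hM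
  rcases htype with hI | hII | hIII
  · -- Type I
    obtain ⟨-, hcls⟩ := hI
    refine ⟨fun x => (hcls x).choose, hcent.choose,
      fun x => ((hcls x).choose_spec).1, ?_⟩
    intro M hM
    show (fun j => nuOp θ (fun x => (hcls x).choose) hcent.choose (M j)) ∈ ρ
    apply polH_core hh hsymρ hcent.choose_spec M
    intro S i0 hi0 hprop
    by_cases hall : ∀ j, ∀ i ∈ S j, M j i = nuOp θ (fun x => (hcls x).choose) hcent.choose (M j)
    · have hcol : (fun j => nuOp θ (fun x => (hcls x).choose) hcent.choose (M j)) =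
          fun j => M j i0 := funext fun j => (hall j i0 (hi0 j)).symm
      rw [hcol]
      exact hM i0
    · push_neg at hall
      obtain ⟨j, hj⟩ := hall
      obtain ⟨z, hoz, -⟩ := (hprop j).resolve_left (by
        intro hl
        obtain ⟨i, hiS, hne⟩ := hj
        exact hne (hl i hiS))
      refine mem_of_center hh hsymρ (p := j) ?_
      show nuOp θ (fun x => (hcls x).choose) hcent.choose (M j) ∈ center ρ
      rw [hoz]
      exact ((hcls z).choose_spec).2
  · -- Type II
    refine ⟨id, hcent.choose, fun x => hrfl x, ?_⟩
    intro M hM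
    show (fun j => nuOp θ id hcent.choose (M j)) ∈ ρ
    apply polH_core hh hsymρ hcent.choose_spec M
    intro S i0 hi0 hprop
    have hmem : (fun j => nuOp θ id hcent.choose (M j)) ∈ rhoTh 0 θ ρ := by
      refine ⟨fun j => M j i0, ?_, ?_⟩
      · intro j _
        show (M j i0, nuOp θ id hcent.choose (M j)) ∈ θ
        rcases hprop j with hl | ⟨z, hoz, hz⟩
        · have h2 : (M j i0, nuOp θ id hcent.choose (M j)) = (M j i0, M j i0) := by
            rw [hl i0 (hi0 j)]
          rw [h2]
          exact hrfl _
        · rw [hoz]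
          exact hsymm _ _ (hz i0 (hi0 j))
      · simpa using hM i0
    exact (Set.ext_iff.mp (hII : ρ = rhoTh 0 θ ρ) _).mpr hmem
  · -- Type III
    obtain ⟨⟨l, hl1, hlh, ⟨T, hT1, hT2, hT3⟩, hρeq⟩, -⟩ := hIII
    have hlh' : l ≤ h := by omega
    set rep : Fin k → Fin k := fun x => (hT2 x).choose with hrepdef
    have hrepT : ∀ x, rep x ∈ T := fun x => ((hT2 x).choose_spec).1
    have hrepθ : ∀ x, (x, rep x) ∈ θ := fun x => ((hT2 x).choose_spec).2
    refine ⟨rep, hcent.choose, hrepθ, ?_⟩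
    intro M hM
    show (fun j => nuOp θ rep hcent.choose (M j)) ∈ ρ
    apply polH_core hh hsymρ hcent.choose_spec M
    intro S i0 hi0 hprop
    set o : Fin h → Fin k := fun j => nuOp θ rep hcent.choose (M j) with hodef
    suffices hx : o ∈ ⋂ σ : Equiv.Perm (Fin h), permuted σ (rhoTh l θ ρ) by
      exact (Set.ext_iff.mp hρeq _).mpr hx
    rw [Set.mem_iInter]
    intro σ
    show o ∘ ⇑σ.symm ∈ rhoTh l θ ρ
    by_cases hA : ∀ j : Fin h, (j : ℕ) < l →
        ∀ i ∈ S (σ.symm j), M (σ.symm j) i = o (σ.symm j)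
    · refine ⟨fun j => M (σ.symm j) i0, ?_, ?_⟩
      · intro j _
        rcases hprop (σ.symm j) with hl' | ⟨z, hoz, hz⟩
        · have := hl' i0 (hi0 (σ.symm j))
          show (M (σ.symm j) i0, o (σ.symm j)) ∈ θ
          rw [this]
          exact hrfl _
        · show (M (σ.symm j) i0, o (σ.symm j)) ∈ θ
          rw [show o (σ.symm j) = rep z from hoz]
          exact htrans _ _ _ (hsymm _ _ (hz i0 (hi0 (σ.symm j)))) (hrepθ z)
      · have heq : (fun j : Fin h => if (j : ℕ) < l then (o ∘ ⇑σ.symm) j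
            else M (σ.symm j) i0) = (fun j => M j i0) ∘ ⇑σ.symm := by
          funext j
          by_cases hjl : (j : ℕ) < l
          · simp only [if_pos hjl, Function.comp]
            exact (hA j hjl i0 (hi0 (σ.symm j))).symm
          · simp only [if_neg hjl, Function.comp]
        show (fun j : Fin h => if (j : ℕ) < l then (o ∘ ⇑σ.symm) j
            else M (σ.symm j) i0) ∈ ρ
        rw [heq]
        exact hsymρ _ σ.symm (hM i0)
    · push_neg at hA
      obtain ⟨j₀, hj₀l, hj₀⟩ := hA
      obtain ⟨z₀, hoz₀, -⟩ := (hprop (σ.symm j₀)).resolve_left (by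
        intro hl'
        obtain ⟨i, hiS, hne⟩ := hj₀
        exact hne (hl' i hiS))
      refine ⟨fun j => rep (o (σ.symm j)), fun j _ => hsymm _ _ (hrepθ _), ?_⟩
      set w : Fin h → Fin k := fun j : Fin h =>
        if (j : ℕ) < l then (o ∘ ⇑σ.symm) j else rep ((o ∘ ⇑σ.symm) j) with hwdef
      show w ∈ ρ
      apply mem_of_few_bad (d := l - 1) (by omega) hsymρ hT3
      have hsub : (Finset.univ.filter fun j => w j ∉ T) ⊆
          (Finset.univ.filter fun j : Fin h => (j : ℕ) < l).erase j₀ := by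
        intro j hj
        rw [Finset.mem_filter] at hj
        have hjl : (j : ℕ) < l := by
          by_contra hjl
          apply hj.2
          rw [hwdef]
          simp only [if_neg hjl]
          exact hrepT _
        rw [Finset.mem_erase, Finset.mem_filter]
        refine ⟨?_, Finset.mem_univ _, hjl⟩
        rintro rfl
        apply hj.2
        rw [hwdef]
        simp only [if_pos hjl, Function.comp]
        rw [show o (σ.symm j) = rep z₀ from hoz₀]
        exact hrepT _
      have hcard := Finset.card_le_card hsub
      rw [Finset.card_erase_of_mem (by
          rw [Finset.mem_filter]; exact ⟨Finset.mem_univ _, hj₀l⟩),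
        card_filter_lt_fin hlh'] at hcard
      omega
end

section
/- Let k ≥ 3, let θ be a nontrivial equivalence relation on E_k, and let ρ be an h-ary central relation on E_k with h ≥ 3 such that η ⊆ ρ. If ρ ⊊ ρ_{0,θ} ⊊ E_k^h, then Pol(θ) ∩ Pol(ρ) is not maximal in Pol(θ); indeed Pol(ρ) ∩ Pol(θ) ⊊ Pol(θ) ∩ Pol(ρ_{0,θ}) ⊊ Pol(θ). -/
lemma mem_rhoTh0 {k h : ℕ} (θ : Set (Fin k × Fin k)) (ρ : Set (Fin h → Fin k))
    (a : Fin h → Fin k) :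
    a ∈ rhoTh 0 θ ρ ↔ ∃ u : Fin h → Fin k, (∀ j, (u j, a j) ∈ θ) ∧ u ∈ ρ := by
  constructor
  · rintro ⟨u, h1, h2⟩
    exact ⟨u, fun j => h1 j (Nat.zero_le _), by simpa using h2⟩
  · rintro ⟨u, h1, h2⟩
    exact ⟨u, fun j _ => h1 j, by simpa using h2⟩

lemma mem_of_theta_pair {k h : ℕ} (hh : 3 ≤ h) {θ : Set (Fin k × Fin k)}
    {ρ : Set (Fin h → Fin k)} (hsym : TotallySymmetric ρ) (heta : eta h θ ⊆ ρ)
    {v : Fin h → Fin k} {i j : Fin h} (hij : i ≠ j) (hv : (v i, v j) ∈ θ) : v ∈ ρ := by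
  have hz0 : 0 < h := by omega
  have hz1 : 1 < h := by omega
  set z0 : Fin h := ⟨0, hz0⟩
  set z1 : Fin h := ⟨1, hz1⟩
  set σ₁ : Equiv.Perm (Fin h) := Equiv.swap z0 i with hσ₁
  set j' : Fin h := σ₁.symm j with hj'
  have hσ₁0 : σ₁ z0 = i := Equiv.swap_apply_left _ _
  have hσ₁j' : σ₁ j' = j := Equiv.apply_symm_apply _ _
  have hj'ne : j' ≠ z0 := by
    intro e
    apply hij
    rw [← hσ₁0, ← hσ₁j', e]
  have hz01 : z0 ≠ z1 := by simp [z0, z1, Fin.ext_iff]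
  set σ₂ : Equiv.Perm (Fin h) := Equiv.swap z1 j' with hσ₂
  set τ : Equiv.Perm (Fin h) := σ₂.trans σ₁ with hτ
  have hτ0 : τ z0 = i := by
    have h2 : σ₂ z0 = z0 := Equiv.swap_apply_of_ne_of_ne hz01 hj'ne.symm
    have h3 : τ z0 = σ₁ (σ₂ z0) := rfl
    rw [h3, h2, hσ₁0]
  have hτ1 : τ z1 = j := by
    have h2 : σ₂ z1 = j' := Equiv.swap_apply_left _ _
    have h3 : τ z1 = σ₁ (σ₂ z1) := rfl
    rw [h3, h2, hσ₁j']
  have hw : v ∘ ⇑τ ∈ ρ := by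
    apply heta
    intro i0 j0 hi0 hj0
    have hi0' : i0 = z0 := Fin.ext hi0
    have hj0' : j0 = z1 := Fin.ext hj0
    show (v (τ i0), v (τ j0)) ∈ θ
    rw [hi0', hj0', hτ0, hτ1]
    exact hv
  have := hsym _ τ⁻¹ hw
  have heq : (v ∘ ⇑τ) ∘ ⇑τ⁻¹ = v := by
    funext x
    simp
  rwa [heq] at this

lemma isClone_polB_inter_polH {k h : ℕ} (θ : Set (Fin k × Fin k)) (σ : Set (Fin h → Fin k)) :
    IsClone (PolB θ ∩ PolH σ) := by
  constructor
  · intro n i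
    exact ⟨fun a b hab => hab i, fun M hM => hM i⟩
  · rintro n m f g ⟨hfθ, hfσ⟩ hg
    constructor
    · intro a b hab
      exact hfθ (fun i => g i a) (fun i => g i b) fun i => (hg i).1 a b hab
    · intro M hM
      exact hfσ (fun j i => g i (M j)) fun i => (hg i).2 M hM

/-- If `η ⊆ ρ` and `ρ ⊊ ρ_{0,θ} ⊊ E_k^h`, then `Pol(θ) ∩ Pol(ρ)` is not
maximal in `Pol(θ)`; indeed `Pol(ρ) ∩ Pol(θ) ⊊ Pol(θ) ∩ Pol(ρ_{0,θ}) ⊊ Pol(θ)`. -/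
theorem stmt14 (k h : ℕ) (hk : 3 ≤ k) (hh : 3 ≤ h)
    (θ : Set (Fin k × Fin k)) (hθ : NontrivEquiv θ)
    (ρ : Set (Fin h → Fin k)) (hρ : IsCentralRel ρ)
    (heta : eta h θ ⊆ ρ)
    (hsub : ρ ⊂ rhoTh 0 θ ρ) (hne : rhoTh 0 θ ρ ⊂ Set.univ) :
    ¬ MaximalIn (PolB θ ∩ PolH ρ) (PolB θ) ∧
    PolH ρ ∩ PolB θ ⊂ PolB θ ∩ PolH (rhoTh 0 θ ρ) ∧
    PolB θ ∩ PolH (rhoTh 0 θ ρ) ⊂ PolB θ := by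
  classical
  obtain ⟨⟨hrefl, hsymθ, htrans⟩, -, -⟩ := hθ
  obtain ⟨-, hTR, hTS, -⟩ := hρ
  -- element of rhoTh \ ρ
  obtain ⟨b, hbρθ, hbρ⟩ := Set.not_subset.mp (Set.ssubset_def ▸ hsub).2
  have hbpair : ∀ i j : Fin h, i ≠ j → (b i, b j) ∉ θ := fun i j hij hmem =>
    hbρ (mem_of_theta_pair hh hTS heta hij hmem)
  obtain ⟨u, hu1, hu2⟩ := (mem_rhoTh0 θ ρ b).1 hbρθ
  have hupair : ∀ i j : Fin h, i ≠ j → (u i, u j) ∉ θ := fun i j hij hmem =>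
    hbpair i j hij (htrans _ _ _ (htrans _ _ _ (hsymθ _ _ (hu1 i)) hmem) (hu1 j))
  -- the unary operation f
  set f : Fin k → Fin k := fun x => if hx : ∃ j, u j = x then b hx.choose else x with hfdef
  have hfu : ∀ j, f (u j) = b j := by
    intro j
    have hx : ∃ j', u j' = u j := ⟨j, rfl⟩
    have hj : hx.choose = j := by
      by_contra hne'
      exact hupair _ _ hne' (by rw [hx.choose_spec]; exact hrefl _)
    rw [hfdef]
    simp only [dif_pos hx, hj]
  have hfcls : ∀ x, (x, f x) ∈ θ := by
    intro x
    rw [hfdef]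
    by_cases hx : ∃ j, u j = x
    · simp only [dif_pos hx]
      have h1 := hu1 hx.choose
      rwa [hx.choose_spec] at h1
    · simp only [dif_neg hx]
      exact hrefl x
  have hfθ : ∀ x y, (x, y) ∈ θ → (f x, f y) ∈ θ := fun x y hxy =>
    htrans _ _ _ (hsymθ _ _ (hfcls x)) (htrans _ _ _ hxy (hfcls y))
  set F : Ops k := ⟨1, fun x => f (x 0)⟩ with hFdef
  have hFB : F ∈ PolB θ := fun a b' hab => hfθ _ _ (hab 0)
  have hFH : F ∈ PolH (rhoTh 0 θ ρ) := by
    intro M hM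
    obtain ⟨w, hw1, hw2⟩ := (mem_rhoTh0 θ ρ _).1 (hM 0)
    exact (mem_rhoTh0 θ ρ _).2 ⟨w, fun j => htrans _ _ _ (hw1 j) (hfcls (M j 0)), hw2⟩
  have hFnot : F ∉ PolH ρ := by
    intro hF
    have h1 := hF (fun j _ => u j) (fun _ => hu2)
    have heq : (fun j => F.2 (fun _ => u j)) = b := funext fun j => hfu j
    rw [heq] at h1
    exact hbρ h1
  -- element outside rhoTh
  obtain ⟨d, -, hd⟩ := Set.not_subset.mp (Set.ssubset_def ▸ hne).2
  -- the unary operation g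
  have hbuniq : ∀ (x : Fin k) (i j : Fin h), (b i, x) ∈ θ → (b j, x) ∈ θ → i = j := by
    intro x i j hi hj
    by_contra hne'
    exact hbpair i j hne' (htrans _ _ _ hi (hsymθ _ _ hj))
  set g : Fin k → Fin k := fun x => if hx : ∃ j, (b j, x) ∈ θ then d hx.choose else x
    with hgdef
  have hgb : ∀ j, g (b j) = d j := by
    intro j
    have hx : ∃ j', (b j', b j) ∈ θ := ⟨j, hrefl _⟩
    have hj : hx.choose = j := hbuniq (b j) _ _ hx.choose_spec (hrefl _)
    rw [hgdef]
    simp only [dif_pos hx, hj]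
  have hgθ : ∀ x y, (x, y) ∈ θ → (g x, g y) ∈ θ := by
    intro x y hxy
    rw [hgdef]
    by_cases hx : ∃ j, (b j, x) ∈ θ
    · have hy : ∃ j, (b j, y) ∈ θ := ⟨hx.choose, htrans _ _ _ hx.choose_spec hxy⟩
      have hcc : hx.choose = hy.choose :=
        hbuniq y _ _ (htrans _ _ _ hx.choose_spec hxy) hy.choose_spec
      simp only [dif_pos hx, dif_pos hy, hcc]
      exact hrefl _
    · have hy : ¬∃ j, (b j, y) ∈ θ := fun ⟨j, hj⟩ =>
        hx ⟨j, htrans _ _ _ hj (hsymθ _ _ hxy)⟩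
      simp only [dif_neg hx, dif_neg hy]
      exact hxy
  set G : Ops k := ⟨1, fun x => g (x 0)⟩ with hGdef
  have hGB : G ∈ PolB θ := fun a b' hab => hgθ _ _ (hab 0)
  have hGnot : G ∉ PolH (rhoTh 0 θ ρ) := by
    intro hG
    have h1 := hG (fun j _ => b j) (fun _ => hbρθ)
    have heq : (fun j => G.2 (fun _ => b j)) = d := funext fun j => hgb j
    rw [heq] at h1
    exact hd h1
  -- the inclusion Pol ρ ∩ Pol θ ⊆ Pol θ ∩ Pol ρ₀θ
  have hincl1 : PolH ρ ∩ PolB θ ⊆ PolB θ ∩ PolH (rhoTh 0 θ ρ) := by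
    rintro ⟨n, f0⟩ ⟨hf0ρ, hf0θ⟩
    refine ⟨hf0θ, ?_⟩
    intro M hM
    choose w hw1 hw2 using fun i => (mem_rhoTh0 θ ρ _).1 (hM i)
    refine (mem_rhoTh0 θ ρ _).2 ⟨fun j => f0 (fun i => w i j), fun j => ?_, ?_⟩
    · exact hf0θ (fun i => w i j) (M j) (fun i => hw1 i j)
    · exact hf0ρ (fun j i => w i j) fun i => hw2 i
  have hss1 : PolH ρ ∩ PolB θ ⊂ PolB θ ∩ PolH (rhoTh 0 θ ρ) := by
    rw [Set.ssubset_def]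
    exact ⟨hincl1, fun hcon => hFnot (hcon ⟨hFB, hFH⟩).1⟩
  have hss2 : PolB θ ∩ PolH (rhoTh 0 θ ρ) ⊂ PolB θ := by
    rw [Set.ssubset_def]
    exact ⟨Set.inter_subset_left, fun hcon => hGnot (hcon hGB).2⟩
  refine ⟨?_, hss1, hss2⟩
  rintro ⟨-, hmax⟩
  exact hmax _ (isClone_polB_inter_polH θ (rhoTh 0 θ ρ))
    ⟨Set.inter_comm (PolH ρ) (PolB θ) ▸ hss1, hss2⟩
end

section
/- Let k ≥ 3, let θ be a nontrivial equivalence relation on E_k, and let ρ be an h-ary central relation on E_k with h ≥ 3 such that η ⊆ ρ. Suppose ρ ⊊ ρ_{0,θ} = E_k^h and there exists an integer l > h such that ρ^l_{0,θ} ≠ E_k^l, where ρ^l_{0,θ} = {(u_1,…,u_l) ∈ E_k^l : ∃ e_i with (e_i,u_i) ∈ θ for all i such that every h-tuple with entries from {e_1,…,e_l} belongs to ρ}. Then Pol(θ) ∩ Pol(ρ) is not maximal in Pol(θ). -/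
/-- The intersection of `Pol` of a binary relation and `Pol` of an `m`-ary
relation is a clone. -/
lemma aux_isClone {k m : ℕ} (θ : Set (Fin k × Fin k)) (μ : Set (Fin m → Fin k)) :
    IsClone (PolB θ ∩ PolH μ) := by
  constructor
  · intro n i
    exact ⟨fun a b hab => hab i, fun M hM => hM i⟩
  · rintro n m' f g ⟨hfθ, hfμ⟩ hg
    refine ⟨?_, ?_⟩
    · intro a b hab
      exact hfθ (fun i => g i a) (fun i => g i b) (fun i => (hg i).1 a b hab)
    · intro M hM
      exact hfμ (fun j i => g i (M j)) (fun i => (hg i).2 M hM)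

/-- If `η ⊆ ρ`, `ρ ⊊ ρ_{0,θ} = E_k^h`, and there exists `l > h` with
`ρ^l_{0,θ} ≠ E_k^l`, then `Pol(θ) ∩ Pol(ρ)` is not maximal in `Pol(θ)`. -/
theorem stmt15 (k h : ℕ) (hk : 3 ≤ k) (hh : 3 ≤ h)
    (θ : Set (Fin k × Fin k)) (hθ : NontrivEquiv θ)
    (ρ : Set (Fin h → Fin k)) (hρ : IsCentralRel ρ)
    (heta : eta h θ ⊆ ρ)
    (hsub : ρ ⊂ rhoTh 0 θ ρ) (hfull : rhoTh 0 θ ρ = Set.univ)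
    (l : ℕ) (hl : h < l) (hne : rhoPow l θ ρ ≠ Set.univ) :
    ¬ MaximalIn (PolB θ ∩ PolH ρ) (PolB θ) := by
  classical
  obtain ⟨⟨hrefl, hsymm, htrans⟩, hdiag, hθuniv⟩ := hθ
  obtain ⟨hρne, hTR, hTS, c, hc⟩ := hρ
  have h0 : 0 < h := by omega
  have h1 : 1 < h := by omega
  have hl0 : 0 < l := by omega
  -- any tuple containing the central element `c` is in ρ
  have hcen : ∀ (w : Fin h → Fin k) (j0 : Fin h), w j0 = c → w ∈ ρ := by
    intro w j0 hj0
    have hmem : (w ∘ ⇑(Equiv.swap (⟨0, h0⟩ : Fin h) j0)) ∈ ρ := by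
      apply hc
      intro i hi
      have hi0 : i = ⟨0, h0⟩ := Fin.ext hi
      subst hi0
      simp [Equiv.swap_apply_left, hj0]
    have h2 := hTS _ (Equiv.swap (⟨0, h0⟩ : Fin h) j0) hmem
    have hw : (w ∘ ⇑(Equiv.swap (⟨0, h0⟩ : Fin h) j0)) ∘
        ⇑(Equiv.swap (⟨0, h0⟩ : Fin h) j0) = w := by
      funext x; simp [Function.comp, Equiv.swap_apply_self]
    rwa [hw] at h2
  -- entries of a tuple outside ρ are pairwise θ-inequivalent
  have hpair : ∀ w : Fin h → Fin k, w ∉ ρ → ∀ i j : Fin h, i ≠ j → (w i, w j) ∉ θ := by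
    intro w hw i j hij hθij
    apply hw
    set z0 : Fin h := ⟨0, h0⟩ with hz0def
    set z1 : Fin h := ⟨1, h1⟩ with hz1def
    set σ1 : Equiv.Perm (Fin h) := Equiv.swap z0 i with hσ1def
    set τ : Equiv.Perm (Fin h) := Equiv.swap z1 (σ1.symm j) with hτdef
    set σ : Equiv.Perm (Fin h) := τ.trans σ1 with hσdef
    have hσ0 : σ z0 = i := by
      have hz01 : z0 ≠ z1 := by simp [hz0def, hz1def, Fin.ext_iff]
      have h2 : z0 ≠ σ1.symm j := by
        intro hEq
        have h3 : σ1 z0 = j := by rw [hEq]; exact σ1.apply_symm_apply j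
        rw [hσ1def, Equiv.swap_apply_left] at h3
        exact hij h3
      rw [hσdef, Equiv.trans_apply, hτdef, Equiv.swap_apply_of_ne_of_ne hz01 h2,
        hσ1def, Equiv.swap_apply_left]
    have hσ1' : σ z1 = j := by
      rw [hσdef, Equiv.trans_apply, hτdef, Equiv.swap_apply_left, Equiv.apply_symm_apply]
    have hmem : (w ∘ ⇑σ) ∈ ρ := by
      apply heta
      intro i' j' hi' hj'
      have hi0 : i' = z0 := Fin.ext hi'
      have hj0 : j' = z1 := Fin.ext hj'
      subst hi0; subst hj0
      simpa [Function.comp, hσ0, hσ1'] using hθij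
    have h4 := hTS _ σ.symm hmem
    have h5 : (w ∘ ⇑σ) ∘ ⇑σ.symm = w := by funext x; simp
    rwa [h5] at h4
  -- every h-tuple has a θ-matching "clique" witness
  have hclique : ∀ u : Fin h → Fin k, ∃ e : Fin h → Fin k, (∀ j, (e j, u j) ∈ θ) ∧
      ∀ w : Fin h → Fin k, (∀ j, ∃ i, w j = e i) → w ∈ ρ := by
    intro u
    have hu : u ∈ rhoTh 0 θ ρ := by rw [hfull]; trivial
    obtain ⟨e, he1, he2⟩ := hu
    have heρ : e ∈ ρ := by
      have heq : (fun j : Fin h => if (j : ℕ) < 0 then u j else e j) = e := by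
        funext j; simp
      rwa [heq] at he2
    refine ⟨e, fun j => he1 j (Nat.zero_le _), ?_⟩
    intro w hw
    choose φ hφ using hw
    by_cases hinj : Function.Injective φ
    · have hbij : Function.Bijective φ := Finite.injective_iff_bijective.mp hinj
      have hmem : e ∘ ⇑(Equiv.ofBijective φ hbij) ∈ ρ := hTS e _ heρ
      have hwe : w = e ∘ ⇑(Equiv.ofBijective φ hbij) := by funext j; exact hφ j
      rwa [hwe]
    · rw [Function.Injective] at hinj
      push_neg at hinj
      obtain ⟨a, b', hab, hne'⟩ := hinj
      exact hTR w ⟨a, b', hne', by rw [hφ a, hφ b', hab]⟩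
  -- an element b with (c, b) ∉ θ
  obtain ⟨p0, hp0⟩ : ∃ p : Fin k × Fin k, p ∉ θ := by
    by_contra hcon; push_neg at hcon
    exact hθuniv.2 fun p _ => hcon p
  obtain ⟨b, hcb⟩ : ∃ b : Fin k, (c, b) ∉ θ := by
    by_contra hcon; push_neg at hcon
    apply hp0
    have h6 : (p0.1, p0.2) ∈ θ :=
      htrans _ _ _ (hsymm _ _ (hcon p0.1)) (hcon p0.2)
    simpa using h6
  -- tuples witnessing the strictness
  obtain ⟨v, hv⟩ : ∃ v : Fin l → Fin k, v ∉ rhoPow l θ ρ := by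
    by_contra hcon; push_neg at hcon
    exact hne (Set.eq_univ_of_forall hcon)
  obtain ⟨w0, hw0⟩ : ∃ w : Fin h → Fin k, w ∉ ρ := by
    by_contra hcon; push_neg at hcon
    exact hρne (Set.eq_univ_of_forall hcon)
  obtain ⟨u, hu1, huρ⟩ : ∃ u, (∀ j, (u j, w0 j) ∈ θ) ∧ u ∈ ρ := by
    have hmem : w0 ∈ rhoTh 0 θ ρ := by rw [hfull]; trivial
    obtain ⟨e, he1, he2⟩ := hmem
    refine ⟨e, fun j => he1 j (Nat.zero_le _), ?_⟩
    have heq : (fun j : Fin h => if (j : ℕ) < 0 then w0 j else e j) = e := by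
      funext j; simp
    rwa [heq] at he2
  have hu_pair : ∀ i j : Fin h, (u i, u j) ∈ θ → i = j := by
    intro i j hij
    by_contra hne'
    apply hpair w0 hw0 i j hne'
    exact htrans _ _ _ (htrans _ _ _ (hsymm _ _ (hu1 i)) hij) (hu1 j)
  obtain ⟨ew, hew1, hew2⟩ := hclique w0
  -- the unary operation g : in Pol θ ∩ Pol (ρ^l) but not in Pol ρ
  let G : Fin k → Fin h := fun x =>
    if hx : ∃ j : Fin h, (x, u j) ∈ θ then hx.choose else ⟨0, h0⟩
  have hG : ∀ (x : Fin k) (j : Fin h), (x, u j) ∈ θ → G x = j := by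
    intro x j hxj
    have hx : ∃ j : Fin h, (x, u j) ∈ θ := ⟨j, hxj⟩
    have hch := hx.choose_spec
    have h7 : (u hx.choose, u j) ∈ θ := htrans _ _ _ (hsymm _ _ hch) hxj
    show (if hx : ∃ j : Fin h, (x, u j) ∈ θ then hx.choose else ⟨0, h0⟩) = j
    rw [dif_pos hx]
    exact hu_pair _ _ h7
  let gop : Ops k := ⟨1, fun x => w0 (G (x 0))⟩
  have hgθ : gop ∈ PolB θ := by
    intro a b' hab
    have hGeq : G (a 0) = G (b' 0) := by
      by_cases hx : ∃ j : Fin h, (a 0, u j) ∈ θ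
      · obtain ⟨j, hj⟩ := hx
        rw [hG (a 0) j hj, hG (b' 0) j (htrans _ _ _ (hsymm _ _ (hab 0)) hj)]
      · have hy : ¬ ∃ j : Fin h, (b' 0, u j) ∈ θ := by
          rintro ⟨j, hj⟩; exact hx ⟨j, htrans _ _ _ (hab 0) hj⟩
        show (if hx' : ∃ j : Fin h, (a 0, u j) ∈ θ then hx'.choose else ⟨0, h0⟩)
          = (if hy' : ∃ j : Fin h, (b' 0, u j) ∈ θ then hy'.choose else ⟨0, h0⟩)
        rw [dif_neg hx, dif_neg hy]
    show (w0 (G (a 0)), w0 (G (b' 0))) ∈ θ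
    rw [hGeq]
    exact hrefl _
  have hgμ : gop ∈ PolH (rhoPow l θ ρ) := by
    intro M _
    refine ⟨fun j => ew (G (M j 0)), fun j => hew1 _, ?_⟩
    intro w' hw'
    apply hew2
    intro j'
    obtain ⟨i, hi⟩ := hw' j'
    exact ⟨G (M i 0), hi⟩
  have hgρ : gop ∉ PolH ρ := by
    intro hcon
    have hval := hcon (fun j _ => u j) (fun _ => huρ)
    have heq : (fun j => gop.2 ((fun j (_ : Fin gop.1) => u j) j)) = w0 := by
      funext j
      show w0 (G (u j)) = w0 j
      rw [hG (u j) j (hrefl _)]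
    rw [heq] at hval
    exact hw0 hval
  -- the l-ary operation f : in Pol θ but not in Pol (ρ^l)
  let Mb : Fin l → Fin l → Fin k := fun i j => if i = j then b else c
  let fop : Ops k := ⟨l, fun x =>
    if hx : ∃ i : Fin l, ∀ j, (x j, Mb i j) ∈ θ then v hx.choose else c⟩
  have hMb_choose : ∀ (x : Fin l → Fin k) (i : Fin l), (∀ j, (x j, Mb i j) ∈ θ) →
      (if hx : ∃ i : Fin l, ∀ j, (x j, Mb i j) ∈ θ then v hx.choose else c) = v i := by
    intro x i hi
    have hx : ∃ i : Fin l, ∀ j, (x j, Mb i j) ∈ θ := ⟨i, hi⟩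
    rw [dif_pos hx]
    congr 1
    have hch := hx.choose_spec
    by_contra hne'
    apply hcb
    have h1' : (x i, Mb hx.choose i) ∈ θ := hch i
    have h2' : (x i, Mb i i) ∈ θ := hi i
    have hcb1 : Mb hx.choose i = c := if_neg hne'
    have hcb2 : Mb i i = b := if_pos rfl
    rw [hcb1] at h1'; rw [hcb2] at h2'
    exact htrans _ _ _ (hsymm _ _ h1') h2'
  have hfθ : fop ∈ PolB θ := by
    intro a b' hab
    by_cases hx : ∃ i : Fin l, ∀ j, (a j, Mb i j) ∈ θ
    · obtain ⟨i, hi⟩ := hx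
      have hib : ∀ j, (b' j, Mb i j) ∈ θ := fun j =>
        htrans _ _ _ (hsymm _ _ (hab j)) (hi j)
      show (fop.2 a, fop.2 b') ∈ θ
      have e1 : fop.2 a = v i := hMb_choose a i hi
      have e2 : fop.2 b' = v i := hMb_choose b' i hib
      rw [e1, e2]
      exact hrefl _
    · have hy : ¬ ∃ i : Fin l, ∀ j, (b' j, Mb i j) ∈ θ := by
        rintro ⟨i, hi⟩; exact hx ⟨i, fun j => htrans _ _ _ (hab j) (hi j)⟩
      show ((if hx' : ∃ i : Fin l, ∀ j, (a j, Mb i j) ∈ θ then v hx'.choose else c),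
        (if hy' : ∃ i : Fin l, ∀ j, (b' j, Mb i j) ∈ θ then v hy'.choose else c)) ∈ θ
      rw [dif_neg hx, dif_neg hy]
      exact hrefl _
  have hfμ : fop ∉ PolH (rhoPow l θ ρ) := by
    intro hcon
    have hcols : ∀ i : Fin l, (fun j => Mb j i) ∈ rhoPow l θ ρ := by
      intro i
      refine ⟨fun j => Mb j i, fun j => hrefl _, ?_⟩
      intro w' hw'
      by_cases hc' : ∃ j0, w' j0 = c
      · obtain ⟨j0, hj0⟩ := hc'
        exact hcen w' j0 hj0
      · push_neg at hc'
        have hallb : ∀ j0, w' j0 = b := by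
          intro j0
          obtain ⟨i', hi'⟩ := hw' j0
          by_cases hii : i' = i
          · rw [hi']; simp [Mb, hii]
          · exfalso; apply hc' j0; rw [hi']; simp [Mb, hii]
        apply hTR
        exact ⟨⟨0, h0⟩, ⟨1, h1⟩, by simp [Fin.ext_iff], by rw [hallb, hallb]⟩
    have hout := hcon Mb hcols
    have heq : (fun j => fop.2 (Mb j)) = v := by
      funext j
      exact hMb_choose (Mb j) j (fun j' => hrefl _)
    rw [heq] at hout
    exact hv hout
  -- Pol θ ∩ Pol ρ ⊆ Pol θ ∩ Pol (ρ^l)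
  have hCF : (PolB θ ∩ PolH ρ) ⊆ (PolB θ ∩ PolH (rhoPow l θ ρ)) := by
    rintro ⟨n, fo⟩ ⟨hfθ', hfρ'⟩
    refine ⟨hfθ', ?_⟩
    intro A hA
    choose e he1 he2 using hA
    refine ⟨fun j => fo (fun i => e i j), ?_, ?_⟩
    · intro j
      exact hfθ' (fun i => e i j) (A j) (fun i => he1 i j)
    · intro w' hw'
      choose ψ hψ using hw'
      have hmem : (fun j' => fo (fun i => e i (ψ j'))) ∈ ρ := by
        apply hfρ' (fun j' i => e i (ψ j'))
        intro i
        apply he2 i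
        intro j'
        exact ⟨ψ j', rfl⟩
      have heq : w' = fun j' => fo (fun i => e i (ψ j')) := funext hψ
      rwa [heq]
  -- conclude
  rintro ⟨hCD, hmax⟩
  apply hmax (PolB θ ∩ PolH (rhoPow l θ ρ)) (aux_isClone θ _)
  constructor
  · refine (Set.ssubset_iff_of_subset hCF).mpr ⟨gop, ⟨hgθ, hgμ⟩, ?_⟩
    rintro ⟨_, hgρ'⟩
    exact hgρ hgρ'
  · refine (Set.ssubset_iff_of_subset Set.inter_subset_left).mpr ⟨fop, hfθ, ?_⟩
    rintro ⟨_, hfμ'⟩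
    exact hfμ hfμ'
end

section
/- Let k ≥ 3, let θ be a nontrivial equivalence relation on E_k with t classes, and let ρ be an h-ary central relation on E_k with h ≥ 3 such that η ⊆ ρ, ρ_{0,θ} = E_k^h, and ρ^l_{0,θ} = E_k^l for all l with h < l ≤ t. Define ς = ⋂_σ (ρ_{1,θ})_σ, the intersection over all permutations σ of {1,…,h}. If ρ ⊊ ς ⊊ E_k^h, then Pol(θ) ∩ Pol(ρ) is not maximal in Pol(θ); indeed Pol(ρ) ∩ Pol(θ) ⊊ Pol(θ) ∩ Pol(ς) ⊊ Pol(θ). -/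
section auxlemmas

variable {k h : ℕ} {θ : Set (Fin k × Fin k)} {ρ : Set (Fin h → Fin k)}

/-- Any tuple with two θ-related coordinates (at distinct positions) is in ρ. -/
lemma pair_in_rho (hh : 3 ≤ h) (hθref : ∀ a, (a, a) ∈ θ)
    (hsym : TotallySymmetric ρ) (heta : eta h θ ⊆ ρ)
    {v : Fin h → Fin k} {i j : Fin h} (hij : i ≠ j)
    (hv : (v i, v j) ∈ θ) : v ∈ ρ := by
  have h0 : (0:ℕ) < h := by omega
  have h1 : (1:ℕ) < h := by omega
  set oh : Fin h := ⟨0, h0⟩ with hoh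
  set ih : Fin h := ⟨1, h1⟩ with hih
  have hoi : oh ≠ ih := by simp [hoh, hih, Fin.ext_iff]
  set τ : Equiv.Perm (Fin h) := Equiv.swap oh i with hτ
  set j' : Fin h := τ.symm j with hj'
  have hτj' : τ j' = j := by simp [hj']
  have hj'oh : j' ≠ oh := by
    intro hc
    apply hij
    have : τ oh = j := by rw [← hc, hτj']
    simp [hτ, Equiv.swap_apply_left] at this
    exact this
  set σ : Equiv.Perm (Fin h) := τ * (Equiv.swap ih j') with hσ
  have hσ0 : σ oh = i := by
    simp only [hσ, Equiv.Perm.mul_apply]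
    rw [Equiv.swap_apply_of_ne_of_ne hoi hj'oh.symm]
    simp [hτ, Equiv.swap_apply_left]
  have hσ1 : σ ih = j := by
    simp only [hσ, Equiv.Perm.mul_apply]
    rw [Equiv.swap_apply_left, hτj']
  have hmem : v ∘ ⇑σ ∈ eta h θ := by
    intro i' j' hi' hj'
    have hi0 : i' = oh := by apply Fin.ext; simpa using hi'
    have hj1 : j' = ih := by apply Fin.ext; simpa using hj'
    subst hi0; subst hj1
    simpa [Function.comp, hσ0, hσ1] using hv
  have : (v ∘ ⇑σ) ∘ ⇑σ.symm ∈ ρ := hsym _ σ.symm (heta hmem)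
  have heq : (v ∘ ⇑σ) ∘ ⇑σ.symm = v := by
    funext x; simp [Function.comp]
  rwa [heq] at this

/-- Any tuple containing a central element is in ρ. -/
lemma center_in_rho (hh : 3 ≤ h) (hsym : TotallySymmetric ρ)
    {c : Fin k} (hc : c ∈ center ρ) {v : Fin h → Fin k} {j₀ : Fin h}
    (hv : v j₀ = c) : v ∈ ρ := by
  have h0 : (0:ℕ) < h := by omega
  set oh : Fin h := ⟨0, h0⟩ with hoh
  set σ : Equiv.Perm (Fin h) := Equiv.swap oh j₀ with hσ
  have hmem : v ∘ ⇑σ ∈ ρ := by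
    apply hc
    intro i hi
    have : i = oh := by apply Fin.ext; simpa using hi
    subst this
    simp [Function.comp, hσ, Equiv.swap_apply_left, hv]
  have : (v ∘ ⇑σ) ∘ ⇑σ.symm ∈ ρ := hsym _ σ.symm hmem
  have heq : (v ∘ ⇑σ) ∘ ⇑σ.symm = v := by
    funext x; simp [Function.comp]
  rwa [heq] at this

/-- Characterization of ς. -/
lemma sig_char (hh : 3 ≤ h) (hθref : ∀ a, (a, a) ∈ θ)
    (hsym : TotallySymmetric ρ) (a : Fin h → Fin k) :
    (a ∈ ⋂ σ : Equiv.Perm (Fin h), permuted σ (rhoTh 1 θ ρ)) ↔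
      ∀ i, ∃ y ∈ ρ, y i = a i ∧ ∀ j, (y j, a j) ∈ θ := by
  have h0 : (0:ℕ) < h := by omega
  set oh : Fin h := ⟨0, h0⟩ with hoh
  constructor
  · intro H i
    set σ : Equiv.Perm (Fin h) := Equiv.swap oh i with hσ
    have H' : a ∈ permuted σ (rhoTh 1 θ ρ) := Set.mem_iInter.mp H σ
    obtain ⟨u, hu1, hu2⟩ := H'
    set p : Fin h → Fin k := fun j => if (j : ℕ) < 1 then (a ∘ ⇑σ.symm) j else u j with hp
    refine ⟨p ∘ ⇑σ.symm, hsym _ σ.symm hu2, ?_, ?_⟩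
    · have hsi : σ.symm i = oh := by simp [hσ]
      simp only [Function.comp, hsi, hp]
      have : ((oh : Fin h) : ℕ) < 1 := by simp [hoh]
      rw [if_pos this]
      simp [hσ]
    · intro l
      by_cases hl : l = i
      · subst hl
        have hsi : σ.symm l = oh := by simp [hσ]
        simp only [Function.comp, hsi, hp]
        have : ((oh : Fin h) : ℕ) < 1 := by simp [hoh]
        rw [if_pos this]
        have : a (σ.symm oh) = a l := by simp [hσ]
        rw [this]; exact hθref _
      · have hne : σ.symm l ≠ oh := by
          intro hc
          apply hl
          have := congrArg σ hc
          simpa [hσ, Equiv.swap_apply_left] using this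
        have hge : 1 ≤ ((σ.symm l : Fin h) : ℕ) := by
          rcases Nat.eq_zero_or_pos ((σ.symm l : Fin h) : ℕ) with hz | hpos
          · exact absurd (Fin.ext (by simpa [hoh] using hz)) hne
          · exact hpos
        simp only [Function.comp, hp]
        rw [if_neg (by omega)]
        have := hu1 (σ.symm l) hge
        have heq : (a ∘ ⇑σ.symm) (σ.symm l) = a l := by
          simp only [Function.comp]
          congr 1
          simp [hσ]
        rwa [heq] at this
  · intro H
    apply Set.mem_iInter.mpr
    intro σ
    obtain ⟨y, hy, hyi, hyθ⟩ := H (σ.symm oh)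
    refine ⟨fun j => y (σ.symm j), fun j _ => hyθ (σ.symm j), ?_⟩
    have heq : (fun j : Fin h => if (j : ℕ) < 1 then (a ∘ ⇑σ.symm) j else y (σ.symm j))
        = y ∘ ⇑σ.symm := by
      funext j
      by_cases hj : (j : ℕ) < 1
      · have : j = oh := by apply Fin.ext; simp [hoh]; omega
        subst this
        simp [Function.comp, hyi]
      · simp [Function.comp, hj]
    rw [heq]
    exact hsym _ σ.symm hy

end auxlemmas
section transversal

variable {k h : ℕ} {θ : Set (Fin k × Fin k)} {ρ : Set (Fin h → Fin k)}

lemma exists_retraction (hh : 3 ≤ h) (t : ℕ)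
    (hθref : ∀ a, (a, a) ∈ θ) (hθsy : ∀ a b, (a, b) ∈ θ → (b, a) ∈ θ)
    (hθtr : ∀ a b c, (a, b) ∈ θ → (b, c) ∈ θ → (a, c) ∈ θ)
    (ht : (classesOf θ).ncard = t)
    (hρuniv : ρ ≠ Set.univ)
    (href : TotallyReflexive ρ) (hsym : TotallySymmetric ρ)
    (heta : eta h θ ⊆ ρ)
    (hfull0 : rhoTh 0 θ ρ = Set.univ)
    (hfull : ∀ l : ℕ, h < l → l ≤ t → rhoPow l θ ρ = Set.univ) :
    ∃ r : Fin k → Fin k, (∀ x, (r x, x) ∈ θ) ∧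
      ∀ w : Fin h → Fin k, (∀ j, ∃ x, w j = r x) → w ∈ ρ := by
  classical
  -- setup for classes
  set S := classesOf θ with hS
  haveI : Finite ↥S := Subtype.finite
  have hcard : Nat.card ↥S = t := by
    rw [Nat.card_coe_set_eq]; exact ht
  have ψ : ↥S ≃ Fin t := Finite.equivFinOfCardEq hcard
  have hA : ∀ s : ↥S, ∃ a, (s : Set (Fin k)) = {b | (a, b) ∈ θ} := fun s => s.2
  choose A hA using hA
  have hAmem : ∀ (s : ↥S) (x : Fin k), x ∈ (s : Set (Fin k)) → (A s, x) ∈ θ := by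
    intro s x hx
    rw [hA s] at hx
    exact hx
  set cls : Fin k → ↥S := fun x => ⟨{b | (x, b) ∈ θ}, ⟨x, rfl⟩⟩ with hcls
  have hclsmem : ∀ x, x ∈ ((cls x : ↥S) : Set (Fin k)) := fun x => hθref x
  have hAx : ∀ x, (A (cls x), x) ∈ θ := fun x => hAmem _ _ (hclsmem x)
  set u : Fin t → Fin k := fun i => A (ψ.symm i) with hu
  -- the key: get e : Fin t → Fin k with (e i, u i) ∈ θ and all tuples from range e in ρ
  have main : ∃ e : Fin t → Fin k, (∀ i, (e i, u i) ∈ θ) ∧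
      ∀ w : Fin h → Fin k, (∀ j, ∃ i, w j = e i) → w ∈ ρ := by
    rcases lt_trichotomy t h with hlt | heq | hgt
    · -- t < h : contradiction, ρ would be univ
      exfalso
      apply hρuniv
      apply Set.eq_univ_iff_forall.mpr
      intro w
      have hpig : ∃ i j : Fin h, i ≠ j ∧ ψ (cls (w i)) = ψ (cls (w j)) := by
        obtain ⟨i, j, hij, hf⟩ := Fintype.exists_ne_map_eq_of_card_lt
          (fun j : Fin h => ψ (cls (w j))) (by simpa using hlt)
        exact ⟨i, j, hij, hf⟩
      obtain ⟨i, j, hij, hf⟩ := hpig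
      have hcl : cls (w i) = cls (w j) := ψ.injective hf
      have : w j ∈ ((cls (w i) : ↥S) : Set (Fin k)) := by
        rw [hcl]; exact hclsmem (w j)
      have hθw : (w i, w j) ∈ θ := this
      exact pair_in_rho hh hθref hsym heta hij hθw
    · -- t = h
      subst heq
      have hu_mem : u ∈ rhoTh 0 θ ρ := by rw [hfull0]; trivial
      obtain ⟨e, he1, he2⟩ := hu_mem
      have he_rho : e ∈ ρ := by
        have heq2 : (fun j : Fin t => if (j : ℕ) < 0 then u j else e j) = e := by
          funext j; simp
        rwa [heq2] at he2
      refine ⟨e, fun i => he1 i (Nat.zero_le _), ?_⟩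
      intro w hw
      choose ι hι using hw
      by_cases hinj : Function.Injective ι
      · have hbij : Function.Bijective ι := Finite.injective_iff_bijective.mp hinj
        set σ : Equiv.Perm (Fin t) := Equiv.ofBijective ι hbij with hσ
        have : w = e ∘ ⇑σ := by
          funext j
          simp only [Function.comp, hσ, Equiv.ofBijective_apply]
          exact hι j
        rw [this]
        exact hsym _ σ he_rho
      · rw [Function.not_injective_iff] at hinj
        obtain ⟨i, j, hfij, hij⟩ := hinj
        apply href
        exact ⟨i, j, hij, by rw [hι i, hι j, hfij]⟩
    · -- t > h
      have hu_mem : u ∈ rhoPow t θ ρ := by rw [hfull t hgt le_rfl]; trivial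
      obtain ⟨e, he1, he2⟩ := hu_mem
      exact ⟨e, he1, he2⟩
  obtain ⟨e, he1, he2⟩ := main
  refine ⟨fun x => e (ψ (cls x)), ?_, ?_⟩
  · intro x
    have h1 : (e (ψ (cls x)), u (ψ (cls x))) ∈ θ := he1 _
    have h2 : u (ψ (cls x)) = A (cls x) := by simp [hu]
    rw [h2] at h1
    exact hθtr _ _ _ h1 (hAx x)
  · intro w hw
    apply he2
    intro j
    obtain ⟨x, hx⟩ := hw j
    exact ⟨ψ (cls x), hx⟩

end transversal
lemma clone_polB_inter_polH {k h : ℕ} (θ : Set (Fin k × Fin k)) (γ : Set (Fin h → Fin k)) :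
    IsClone (PolB θ ∩ PolH γ) := by
  constructor
  · intro n i
    constructor
    · intro a b hab; exact hab i
    · intro M hM; exact hM i
  · rintro n m F G ⟨hFB, hFH⟩ hG
    constructor
    · intro a b hab
      exact hFB _ _ (fun i => (hG i).1 a b hab)
    · intro M hM
      exact hFH (fun j i => G i (M j)) (fun i => (hG i).2 M hM)

/-- If `η ⊆ ρ`, `ρ_{0,θ} = E_k^h`, `ρ^l_{0,θ} = E_k^l` for all `h < l ≤ t`,
and `ρ ⊊ ς ⊊ E_k^h` where `ς = ⋂_σ (ρ_{1,θ})_σ`, then `Pol(θ) ∩ Pol(ρ)` is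
not maximal in `Pol(θ)`; indeed `Pol(ρ) ∩ Pol(θ) ⊊ Pol(θ) ∩ Pol(ς) ⊊ Pol(θ)`. -/
theorem stmt16 (k h t : ℕ) (hk : 3 ≤ k) (hh : 3 ≤ h)
    (θ : Set (Fin k × Fin k)) (hθ : NontrivEquiv θ)
    (ht : (classesOf θ).ncard = t)
    (ρ : Set (Fin h → Fin k)) (hρ : IsCentralRel ρ)
    (heta : eta h θ ⊆ ρ)
    (hfull0 : rhoTh 0 θ ρ = Set.univ)
    (hfull : ∀ l : ℕ, h < l → l ≤ t → rhoPow l θ ρ = Set.univ)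
    (hsub : ρ ⊂ ⋂ σ : Equiv.Perm (Fin h), permuted σ (rhoTh 1 θ ρ))
    (hne : (⋂ σ : Equiv.Perm (Fin h), permuted σ (rhoTh 1 θ ρ)) ⊂ Set.univ) :
    ¬ MaximalIn (PolB θ ∩ PolH ρ) (PolB θ) ∧
    PolH ρ ∩ PolB θ ⊂
      PolB θ ∩ PolH (⋂ σ : Equiv.Perm (Fin h), permuted σ (rhoTh 1 θ ρ)) ∧
    PolB θ ∩ PolH (⋂ σ : Equiv.Perm (Fin h), permuted σ (rhoTh 1 θ ρ)) ⊂ PolB θ := by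
  classical
  obtain ⟨⟨hθref, hθsy, hθtr⟩, hθd, hθu⟩ := hθ
  obtain ⟨hρuniv, href, hsym, c, hcmem⟩ := hρ
  set Sig := ⋂ σ : Equiv.Perm (Fin h), permuted σ (rhoTh 1 θ ρ) with hSigdef
  have i0 : Fin h := ⟨0, by omega⟩
  have char : ∀ a : Fin h → Fin k, a ∈ Sig ↔
      ∀ i, ∃ y ∈ ρ, y i = a i ∧ ∀ j, (y j, a j) ∈ θ :=
    fun a => sig_char hh hθref hsym a
  have hρS : ρ ⊆ Sig := hsub.subset
  obtain ⟨r, hr1, hr2⟩ := exists_retraction hh t hθref hθsy hθtr ht hρuniv href hsym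
    heta hfull0 hfull
  have hcρ : ∀ (v : Fin h → Fin k) (j₀ : Fin h), v j₀ = c → v ∈ ρ :=
    fun v j₀ hv => center_in_rho hh hsym hcmem hv
  have hpair : ∀ {v : Fin h → Fin k} {i j : Fin h}, i ≠ j → (v i, v j) ∈ θ → v ∈ ρ :=
    fun hij hv => pair_in_rho hh hθref hsym heta hij hv
  -- Part A: inclusion
  have hincl : PolH ρ ∩ PolB θ ⊆ PolB θ ∩ PolH Sig := by
    rintro ⟨n, F⟩ ⟨hFρ, hFθ⟩
    refine ⟨hFθ, ?_⟩
    intro M hM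
    apply (char _).mpr
    intro j₀
    have hyl : ∀ l : Fin n, ∃ y ∈ ρ, y j₀ = M j₀ l ∧ ∀ j, (y j, M j l) ∈ θ := by
      intro l
      exact ((char (fun j => M j l)).mp (hM l)) j₀
    choose y hy1 hy2 hy3 using hyl
    refine ⟨fun j => F (fun l => y l j), hFρ (fun j l => y l j) (fun l => hy1 l), ?_, ?_⟩
    · show F (fun l => y l j₀) = F (M j₀)
      congr 1
      exact funext fun l => hy2 l
    · intro j
      exact hFθ (fun l => y l j) (M j) (fun l => hy3 l j)
  -- Part B: the h-ary operation separating Pol ρ from Pol Sig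
  obtain ⟨q, hqS, hqρ⟩ := Set.exists_of_ssubset hsub
  have hqine : ∀ i j : Fin h, i ≠ j → (q i, q j) ∉ θ :=
    fun i j hij hv => hqρ (hpair hij hv)
  obtain ⟨y, hy⟩ := Classical.axiomOfChoice ((char q).mp hqS)
  have hy1 : ∀ i, y i ∈ ρ := fun i => (hy i).1
  have hy2 : ∀ i, y i i = q i := fun i => (hy i).2.1
  have hy3 : ∀ i j, (y i j, q j) ∈ θ := fun i j => (hy i).2.2 j
  set Row : Fin h → Fin h → Fin k := fun m i => y i m with hRow
  set P : (Fin h → Fin k) → Prop := fun x => ∀ i j, (x i, x j) ∈ θ with hP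
  set F1 : (Fin h → Fin k) → Fin k := fun x =>
    if hPx : P x then (if hm : ∃ m, x = Row m then q hm.choose else r (x i0)) else c
    with hF1
  have hF1val : ∀ x, P x → (F1 x, x i0) ∈ θ := by
    intro x hPx
    simp only [hF1]
    rw [dif_pos hPx]
    by_cases hm : ∃ m, x = Row m
    · rw [dif_pos hm]
      have hx0 := congrFun hm.choose_spec i0
      rw [hx0]
      exact hθsy _ _ (hy3 i0 hm.choose)
    · rw [dif_neg hm]
      exact hr1 _
  have hf1B : (⟨h, F1⟩ : Ops k) ∈ PolB θ := by
    intro a b hab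
    by_cases hPa : P a
    · have hPb : P b := fun i j =>
        hθtr _ _ _ (hθsy _ _ (hab i)) (hθtr _ _ _ (hPa i j) (hab j))
      exact hθtr _ _ _ (hθtr _ _ _ (hF1val a hPa) (hab i0)) (hθsy _ _ (hF1val b hPb))
    · have hPb : ¬ P b := by
        intro hPb
        exact hPa (fun i j => hθtr _ _ _ (hab i) (hθtr _ _ _ (hPb i j) (hθsy _ _ (hab j))))
      show (F1 a, F1 b) ∈ θ
      simp only [hF1]
      rw [dif_neg hPa, dif_neg hPb]
      exact hθref c
  have hf1ρ : (⟨h, F1⟩ : Ops k) ∉ PolH ρ := by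
    intro hf
    have hcols : ∀ i, (fun j => (fun (j' : Fin h) (i' : Fin h) => y i' j') j i) ∈ ρ := by
      intro i
      exact hy1 i
    have hmem := hf (fun j i => y i j) hcols
    have hout : (fun j => F1 (fun i => y i j)) = q := by
      funext j
      have hPj : P (fun i => y i j) := fun i i' =>
        hθtr _ _ _ (hy3 i j) (hθsy _ _ (hy3 i' j))
      simp only [hF1]
      rw [dif_pos hPj]
      have hm : ∃ m, (fun i => y i j) = Row m := ⟨j, rfl⟩
      rw [dif_pos hm]
      have spec := hm.choose_spec
      have h1 : y hm.choose j = q hm.choose := by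
        have hcf := congrFun spec hm.choose
        simp only [hRow] at hcf
        exact hcf.trans (hy2 _)
      have h2 : (q hm.choose, q j) ∈ θ := by
        rw [← h1]; exact hy3 hm.choose j
      rcases eq_or_ne hm.choose j with he | hne
      · rw [he]
      · exact absurd h2 (hqine _ _ hne)
    exact hqρ (hout ▸ hmem)
  have hf1S : (⟨h, F1⟩ : Ops k) ∈ PolH Sig := by
    intro M hM
    by_cases hall : ∀ j, P (M j)
    · have hw : ∀ j, (F1 (M j), M j i0) ∈ θ := fun j => hF1val (M j) (hall j)
      apply (char _).mpr
      intro j₀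
      by_cases hm : ∃ m, M j₀ = Row m
      · have spec := hm.choose_spec
        have hval : F1 (M j₀) = q hm.choose := by
          simp only [hF1]
          rw [dif_pos (hall j₀), dif_pos hm]
        obtain ⟨z, hz1, hz2, hz3⟩ := ((char _).mp (hM hm.choose)) j₀
        refine ⟨z, hz1, ?_, ?_⟩
        · show z j₀ = F1 (M j₀)
          rw [hz2, hval]
          have : M j₀ hm.choose = Row hm.choose hm.choose := congrFun spec hm.choose
          rw [this]
          exact hy2 hm.choose
        · intro j
          show (z j, F1 (M j)) ∈ θ
          exact hθtr _ _ _ (hθtr _ _ _ (hz3 j) (hall j hm.choose i0)) (hθsy _ _ (hw j))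
      · have hval : F1 (M j₀) = r (M j₀ i0) := by
          simp only [hF1]
          rw [dif_pos (hall j₀), dif_neg hm]
        refine ⟨fun j => r (M j i0), hr2 _ (fun j => ⟨M j i0, rfl⟩), ?_, ?_⟩
        · show r (M j₀ i0) = F1 (M j₀)
          rw [hval]
        · intro j
          show (r (M j i0), F1 (M j)) ∈ θ
          exact hθtr _ _ _ (hr1 (M j i0)) (hθsy _ _ (hw j))
    · push_neg at hall
      obtain ⟨j₀, hj₀⟩ := hall
      have hval : F1 (M j₀) = c := by
        simp only [hF1]
        rw [dif_neg hj₀]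
      exact hρS (hcρ _ j₀ hval)
  -- Part C: unary operation in Pol θ but not in Pol Sig
  obtain ⟨w, -, hwS⟩ := Set.exists_of_ssubset hne
  have hwine : ∀ i j : Fin h, i ≠ j → (w i, w j) ∉ θ :=
    fun i j hij hv => hwS (hρS (hpair hij hv))
  have hwmem : w ∈ rhoTh 0 θ ρ := by rw [hfull0]; trivial
  obtain ⟨a, ha1, ha2⟩ := hwmem
  have haρ : a ∈ ρ := by
    have heq : (fun j : Fin h => if (j : ℕ) < 0 then w j else a j) = a := by
      funext j; simp
    rwa [heq] at ha2
  have haθ : ∀ j, (a j, w j) ∈ θ := fun j => ha1 j (Nat.zero_le _)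
  have hainj : Function.Injective a := by
    intro i j hij
    by_contra hne'
    apply hwine i j hne'
    exact hθtr _ _ _ (hθsy _ _ (haθ i)) (by rw [hij]; exact haθ j)
  set G : Fin k → Fin k := fun x => if hm : ∃ j, a j = x then w hm.choose else x with hG
  have hGθ : ∀ x, (G x, x) ∈ θ := by
    intro x
    simp only [hG]
    by_cases hm : ∃ j, a j = x
    · rw [dif_pos hm]
      have h1 : (w hm.choose, a hm.choose) ∈ θ := hθsy _ _ (haθ hm.choose)
      rwa [hm.choose_spec] at h1
    · rw [dif_neg hm]
      exact hθref x
  have hgB : (⟨1, fun x => G (x 0)⟩ : Ops k) ∈ PolB θ := by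
    intro x y' hxy
    exact hθtr _ _ _ (hGθ _) (hθtr _ _ _ (hxy 0) (hθsy _ _ (hGθ _)))
  have hgS : (⟨1, fun x => G (x 0)⟩ : Ops k) ∉ PolH Sig := by
    intro hf
    have hmem := hf (fun j _ => a j) (fun _ => hρS haρ)
    have hout : (fun j => G ((fun (_ : Fin 1) => a j) 0)) = w := by
      funext j
      show G (a j) = w j
      simp only [hG]
      have hm : ∃ j', a j' = a j := ⟨j, rfl⟩
      rw [dif_pos hm]
      exact congrArg w (hainj hm.choose_spec)
    rw [hout] at hmem
    exact hwS hmem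
  -- assembly
  have part2 : PolH ρ ∩ PolB θ ⊂ PolB θ ∩ PolH Sig := by
    rw [Set.ssubset_def]
    refine ⟨hincl, ?_⟩
    intro hcon
    exact hf1ρ (hcon ⟨hf1B, hf1S⟩).1
  have part3 : PolB θ ∩ PolH Sig ⊂ PolB θ := by
    rw [Set.ssubset_def]
    refine ⟨Set.inter_subset_left, ?_⟩
    intro hcon
    exact hgS (hcon hgB).2
  refine ⟨?_, part2, part3⟩
  rintro ⟨-, h2⟩
  apply h2 (PolB θ ∩ PolH Sig) (clone_polB_inter_polH θ Sig)
  constructor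
  · rw [Set.inter_comm (PolB θ) (PolH ρ)]
    exact part2
  · exact part3
end

section
/- Let h ≥ 3, let ρ be the h-regular relation on E_k determined by an h-regular family T = {θ_1,…,θ_m} of equivalence relations on E_k, and let θ be a nontrivial equivalence relation on E_k. Then ρ is θ-closed if and only if θ ⊆ θ_i for all 1 ≤ i ≤ m. -/
/-!
Membership in `hRegRel h T` depends only on the `T i`-classes of the entries, so `θ ⊆ T i`
for all `i` makes it θ-closed. Conversely, if `(b, c) ∈ θ` but `(b, c) ∉ T i`, take a
transversal `v` of the `h` classes of `T i` passing through `b` and `c`. Replacing `c` by `b`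
repeats an entry, so the new tuple lies in the relation; moving that entry back inside its
θ-class gives `v`, which meets all `h` classes of `T i` and so lies outside.
-/

def classOf {A : Type*} (θ : Set (A × A)) (x : A) : Set A := {y | (x, y) ∈ θ}

section Classes

variable {A : Type*} {θ : Set (A × A)}

lemma classOf_mem_classesOf (θ : Set (A × A)) (x : A) : classOf θ x ∈ classesOf θ :=
  ⟨x, rfl⟩

lemma mem_classOf_self (hθ : IsEquivRel θ) (x : A) : x ∈ classOf θ x :=
  hθ.1 x

lemma classOf_eq_of_mem (hθ : IsEquivRel θ) {x y : A} (hy : y ∈ classOf θ x) :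
    classOf θ y = classOf θ x := by
  ext z
  exact ⟨hθ.2.2 _ _ _ hy, hθ.2.2 _ _ _ (hθ.2.1 _ _ hy)⟩

lemma mem_iff_of_mem_classesOf (hθ : IsEquivRel θ) {S : Set A} (hS : S ∈ classesOf θ)
    {y z : A} (hyz : (y, z) ∈ θ) : y ∈ S ↔ z ∈ S := by
  obtain ⟨x, rfl⟩ := hS
  exact ⟨fun hy => hθ.2.2 _ _ _ hy hyz, fun hz => hθ.2.2 _ _ _ hz (hθ.2.1 _ _ hyz)⟩

lemma exists_transversal_through [Finite A] {h : ℕ} (hθ : IsEquivRel θ)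
    (hcard : (classesOf θ).ncard = h) {b c : A} (hbc : (b, c) ∉ θ) :
    ∃ (v : Fin h → A) (p q : Fin h), p ≠ q ∧ v p = b ∧ v q = c ∧
      ∀ x, ∃ j, v j ∈ classOf θ x := by
  let e : classesOf θ ≃ Fin h := Finite.equivFinOfCardEq (by rwa [Nat.card_coe_set_eq])
  have hrep : ∀ S : classesOf θ, ∃ y, y ∈ (S : Set A) := by
    rintro ⟨_, x, rfl⟩
    exact ⟨x, mem_classOf_self hθ x⟩
  choose rep hrep_mem using hrep
  let p := e ⟨_, classOf_mem_classesOf θ b⟩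
  let q := e ⟨_, classOf_mem_classesOf θ c⟩
  have hpq : p ≠ q := by
    intro hpq
    have hcl : classOf θ b = classOf θ c := congrArg Subtype.val (e.injective hpq)
    have hc : c ∈ classOf θ b := by rw [hcl]; exact mem_classOf_self hθ c
    exact hbc hc
  let v := Function.update (Function.update (fun j => rep (e.symm j)) p b) q c
  have hv : ∀ j, v j ∈ (e.symm j : Set A) := by
    intro j
    by_cases hjq : j = q
    · subst hjq; simpa [v, q] using mem_classOf_self hθ c
    by_cases hjp : j = p
    · subst hjp; simpa [v, p, hpq] using mem_classOf_self hθ b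
    simpa [v, hjp, hjq] using hrep_mem (e.symm j)
  refine ⟨v, p, q, hpq, by simp [v, hpq], by simp [v], fun x => ?_⟩
  exact ⟨e ⟨_, classOf_mem_classesOf θ x⟩, by simpa using hv (e ⟨_, classOf_mem_classesOf θ x⟩)⟩

end Classes

section RegularRelation

variable {A : Type*} {h m : ℕ} {T : Fin m → Set (A × A)}

lemma mem_hRegRel_iff_of_rel (hT : ∀ i, IsEquivRel (T i)) {a u : Fin h → A}
    (hua : ∀ i j, (u j, a j) ∈ T i) : a ∈ hRegRel h T ↔ u ∈ hRegRel h T := by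
  have hmet : ∀ i,
      {S ∈ classesOf (T i) | ∃ j, a j ∈ S} = {S ∈ classesOf (T i) | ∃ j, u j ∈ S} := by
    intro i
    ext S
    simp only [Set.mem_ofPred_eq, and_congr_right_iff]
    intro hS
    simp only [mem_iff_of_mem_classesOf (hT i) hS (hua i _)]
  simp only [hRegRel, Set.mem_ofPred_eq, hmet]

lemma mem_hRegRel_of_eq (hT : ∀ i, IsEquivRel (T i)) {a : Fin h → A} {p q : Fin h}
    (hpq : p ≠ q) (ha : a p = a q) : a ∈ hRegRel h T := by
  intro i
  have hsub :
      {S ∈ classesOf (T i) | ∃ j, a j ∈ S} ⊆ (fun j => classOf (T i) (a j)) '' {q}ᶜ := by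
    rintro S ⟨⟨x, rfl⟩, j, hj⟩
    rcases eq_or_ne j q with rfl | hjq
    · exact ⟨p, hpq, show classOf (T i) (a p) = _ by rw [ha]; exact classOf_eq_of_mem (hT i) hj⟩
    · exact ⟨j, hjq, classOf_eq_of_mem (hT i) hj⟩
  calc _ ≤ _ := Set.ncard_le_ncard hsub (Set.toFinite _)
    _ ≤ ({q}ᶜ : Set (Fin h)).ncard := Set.ncard_image_le (Set.toFinite _)
    _ = h - 1 := by rw [Set.ncard_compl, Set.ncard_singleton, Nat.card_fin]

lemma notMem_hRegRel_of_meets_all_classes (hpos : 0 < h) {i : Fin m}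
    (hcard : (classesOf (T i)).ncard = h) {a : Fin h → A}
    (ha : ∀ x, ∃ j, a j ∈ classOf (T i) x) : a ∉ hRegRel h T := by
  intro hmem
  have hmet : {S ∈ classesOf (T i) | ∃ j, a j ∈ S} = classesOf (T i) := by
    refine Set.sep_eq_self_iff_mem_true.2 ?_
    rintro S ⟨x, rfl⟩
    exact ha x
  have := hmem i
  rw [hmet, hcard] at this
  omega

end RegularRelation

lemma mem_rhoTh_zero {k h : ℕ} {θ : Set (Fin k × Fin k)} {ρ : Set (Fin h → Fin k)}
    {a : Fin h → Fin k} : a ∈ rhoTh 0 θ ρ ↔ ∃ u ∈ ρ, ∀ j, (u j, a j) ∈ θ := by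
  simp [rhoTh, and_comm]

lemma thetaClosed_iff {k h : ℕ} {θ : Set (Fin k × Fin k)} (hθ : ∀ x, (x, x) ∈ θ)
    {ρ : Set (Fin h → Fin k)} :
    ThetaClosed θ ρ ↔ ∀ u ∈ ρ, ∀ a, (∀ j, (u j, a j) ∈ θ) → a ∈ ρ := by
  refine ⟨fun hρ u hu a hua => hρ ▸ mem_rhoTh_zero.2 ⟨u, hu, hua⟩, fun hρ => ?_⟩
  ext a
  rw [mem_rhoTh_zero]
  exact ⟨fun ha => ⟨a, ha, fun j => hθ _⟩, fun ⟨u, hu, hua⟩ => hρ u hu a hua⟩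

theorem stmt17_general (k h m : ℕ)
    (T : Fin m → Set (Fin k × Fin k)) (hT : IsHRegFamily h T)
    (θ : Set (Fin k × Fin k)) (hθ : NontrivEquiv θ) :
    ThetaClosed θ (hRegRel h T) ↔ ∀ i : Fin m, θ ⊆ T i := by
  obtain ⟨hequiv, hcard, -⟩ := hT
  rw [thetaClosed_iff hθ.1.1]
  refine ⟨fun hclosed i => ?_, fun hsub u hu a hua => ?_⟩
  · by_contra hns
    obtain ⟨⟨b, c⟩, hbc, hbcT⟩ := Set.not_subset.1 hns
    obtain ⟨v, p, q, hpq, hvp, hvq, hv⟩ := exists_transversal_through (hequiv i) (hcard i) hbcT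
    have hw : Function.update v q b ∈ hRegRel h T :=
      mem_hRegRel_of_eq hequiv hpq (by simp [hvp, hpq])
    refine notMem_hRegRel_of_meets_all_classes p.pos (hcard i) hv (hclosed _ hw v fun j => ?_)
    rcases eq_or_ne j q with rfl | hjq
    · simpa [hvq] using hbc
    · simpa [hjq] using hθ.1.1 (v j)
  · exact (mem_hRegRel_iff_of_rel hequiv fun i j => hsub i (hua j)).2 hu

/-- For `h ≥ 3`, the `h`-regular relation `ρ` determined by an `h`-regular
family `T = {θ₁,…,θ_m}` is θ-closed iff `θ ⊆ θᵢ` for all `i`. -/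
theorem stmt17 (k h m : ℕ) (hh : 3 ≤ h) (hm : 1 ≤ m)
    (T : Fin m → Set (Fin k × Fin k)) (hT : IsHRegFamily h T)
    (θ : Set (Fin k × Fin k)) (hθ : NontrivEquiv θ) :
    ThetaClosed θ (hRegRel h T) ↔ ∀ i : Fin m, θ ⊆ T i :=
  stmt17_general k h m T hT θ hθ
end
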